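/- arXiv:1911.04358 — 7 statements merged into one kernel-verified Lean document; each statement's English description precedes it below -/
import Mathlib

section
/- For every n ≥ 4, the maximum number of colors in an edge-coloring of K_n with no properly colored path on 4 vertices equals 2. -/
/-!
In the star coloring (edges at one vertex get color `1`, all others `0`) a properly colored
`P_4` would have a middle edge of color `0`, so both of its end edges would have to meet the
centre, i.e. both ends of the path would be the centre. Conversely, in a coloring without a
properly colored `P_4`, every path `w x y z` has two consecutive edges of equal color. If every
`P_3` is monochromatic, the coloring is constant. Otherwise a properly colored `P_3` `a b d` with
colors `α ≠ β` forces every edge from `a` to a vertex off the path to have color `α` and every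
edge from `d` color `β`; every other edge is then the middle edge of a `P_4` whose end edges are
colored from `{α, β}`, so it is colored from `{α, β}` as well.
-/

/-- Number of distinct colors used on the edges of `K_n` by the edge-coloring `c`. -/
def colorsUsed (n : ℕ) (c : Fin n → Fin n → ℕ) : ℕ :=
  ((Finset.univ.filter fun p : Fin n × Fin n => p.1 ≠ p.2).image fun p => c p.1 p.2).card

/-- The edge-colored `K_n` contains a properly colored path on `l` vertices. -/
def HasPCPath (n l : ℕ) (c : Fin n → Fin n → ℕ) : Prop :=
  ∃ p : Fin l → Fin n, Function.Injective p ∧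
    ∀ i : ℕ, (h : i + 2 < l) →
      c (p ⟨i, by omega⟩) (p ⟨i + 1, by omega⟩) ≠
        c (p ⟨i + 1, by omega⟩) (p ⟨i + 2, h⟩)


open Finset

lemma Fin.exists_notMem_of_card_lt {n : ℕ} (s : Finset (Fin n)) (hs : #s < n) :
    ∃ e, e ∉ s := by
  obtain ⟨e, -, he⟩ := exists_mem_notMem_of_card_lt_card (s := s) (t := univ) 
    (by rwa [card_univ, Fintype.card_fin])
  exact ⟨e, he⟩

lemma colorsUsed_le_card {n : ℕ} {c : Fin n → Fin n → ℕ} (s : Finset ℕ)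
    (hs : ∀ u v, u ≠ v → c u v ∈ s) : colorsUsed n c ≤ #s :=
  card_le_card <| image_subset_iff.2 fun p hp => hs p.1 p.2 (mem_filter.1 hp).2

lemma hasPCPath_four_iff {n : ℕ} {c : Fin n → Fin n → ℕ} :
    HasPCPath n 4 c ↔ ∃ w x y z, w ≠ x ∧ w ≠ y ∧ w ≠ z ∧ x ≠ y ∧ x ≠ z ∧ y ≠ z ∧
      c w x ≠ c x y ∧ c x y ≠ c y z := by
  constructor
  · rintro ⟨p, hp, hc⟩
    refine ⟨p 0, p 1, p 2, p 3, ?_, ?_, ?_, ?_, ?_, ?_, hc 0 (by norm_num),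
      hc 1 (by norm_num)⟩ <;> simp [hp.ne_iff]
  · rintro ⟨w, x, y, z, hwx, hwy, hwz, hxy, hxz, hyz, h₁, h₂⟩
    refine ⟨![w, x, y, z], ?_, fun i hi => ?_⟩
    · intro i j hij
      fin_cases i <;> fin_cases j <;> simp_all [eq_comm]
    · obtain rfl | rfl : i = 0 ∨ i = 1 := by omega
      exacts [h₁, h₂]

section Star

variable {n : ℕ}

def starColoring (v : Fin n) (i j : Fin n) : ℕ := if i = v ∨ j = v then 1 else 0

lemma starColoring_symm (v i j : Fin n) : starColoring v i j = starColoring v j i := by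
  simp only [starColoring, or_comm]

lemma not_hasPCPath_starColoring (v : Fin n) : ¬ HasPCPath n 4 (starColoring v) := by
  rw [hasPCPath_four_iff]
  rintro ⟨w, x, y, z, -, -, hwz, -, -, -, h₁, h₂⟩
  simp only [starColoring] at h₁ h₂
  split_ifs at h₁ h₂ <;> grind

lemma colorsUsed_starColoring (hn : 3 ≤ n) (v : Fin n) :
    colorsUsed n (starColoring v) = 2 := by
  obtain ⟨u, hu⟩ := Fin.exists_notMem_of_card_lt {v} (by rw [card_singleton]; omega)
  obtain ⟨w, hw⟩ := Fin.exists_notMem_of_card_lt {v, u} (by grind [card_le_two])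
  simp only [mem_insert, mem_singleton, not_or] at hu hw
  have : (univ.filter fun p : Fin n × Fin n => p.1 ≠ p.2).image
      (fun p => starColoring v p.1 p.2) = {0, 1} := by
    ext m
    simp only [mem_image, mem_filter, mem_univ, true_and, mem_insert, mem_singleton]
    constructor
    · rintro ⟨p, -, rfl⟩
      unfold starColoring
      split_ifs <;> simp
    · rintro (rfl | rfl)
      · exact ⟨(u, w), Ne.symm hw.2, by simp [starColoring, hu, hw.1]⟩
      · exact ⟨(v, u), Ne.symm hu, by simp [starColoring]⟩
  rw [colorsUsed, this]
  rfl

end Star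

lemma eq_of_adjacent_edges_eq {V α : Type*} {c : V → V → α} (hsym : ∀ i j, c i j = c j i)
    (h : ∀ a b d, a ≠ b → a ≠ d → b ≠ d → c a b = c b d) {u v x y : V}
    (huv : u ≠ v) (hxy : x ≠ y) : c u v = c x y := by
  have hstar : ∀ a b d, a ≠ b → a ≠ d → c a b = c a d := by
    intro a b d hab had
    rcases eq_or_ne b d with rfl | hbd
    · rfl
    · rw [hsym, h b a d hab.symm hbd had]
  rcases eq_or_ne u x with rfl | hux
  · exact hstar u v y huv hxy
  · rw [hstar u v x huv hux, hsym, hstar x u y hux.symm hxy]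

section NoPCP4

variable {n : ℕ} {c : Fin n → Fin n → ℕ}

lemma eq_or_eq_of_not_hasPCPath (hc : ¬ HasPCPath n 4 c) {w x y z : Fin n} (hwx : w ≠ x)
    (hwy : w ≠ y) (hwz : w ≠ z) (hxy : x ≠ y) (hxz : x ≠ z) (hyz : y ≠ z) :
    c w x = c x y ∨ c x y = c y z := by
  by_contra! h
  exact hc (hasPCPath_four_iff.2 ⟨w, x, y, z, hwx, hwy, hwz, hxy, hxz, hyz, h⟩)

lemma mem_of_not_hasPCPath (hc : ¬ HasPCPath n 4 c) {s : Finset ℕ} {w x y z : Fin n}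
    (hwx : w ≠ x) (hwy : w ≠ y) (hwz : w ≠ z) (hxy : x ≠ y) (hxz : x ≠ z) (hyz : y ≠ z)
    (hw : c w x ∈ s) (hz : c y z ∈ s) : c x y ∈ s := by
  rcases eq_or_eq_of_not_hasPCPath hc hwx hwy hwz hxy hxz hyz with h | h
  exacts [h ▸ hw, h ▸ hz]

lemma eq_of_not_hasPCPath (hc : ¬ HasPCPath n 4 c) (hsym : ∀ i j, c i j = c j i)
    {a b d e : Fin n} (hab : a ≠ b) (had : a ≠ d) (hbd : b ≠ d) (hea : e ≠ a) (heb : e ≠ b)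
    (hed : e ≠ d) (hprop : c a b ≠ c b d) : c a e = c a b := by
  rw [hsym]
  exact (eq_or_eq_of_not_hasPCPath hc hea heb hed hab had hbd).resolve_right hprop

lemma mem_pair_of_not_hasPCPath (hn : 4 ≤ n) (hc : ¬ HasPCPath n 4 c)
    (hsym : ∀ i j, c i j = c j i) {a b d : Fin n} (hab : a ≠ b) (had : a ≠ d) (hbd : b ≠ d)
    (hprop : c a b ≠ c b d) {u v : Fin n} (huv : u ≠ v) :
    c u v ∈ ({c a b, c b d} : Finset ℕ) := by
  set s : Finset ℕ := {c a b, c b d}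
  have hα : c a b ∈ s := mem_insert_self _ _
  have hβ : c b d ∈ s := mem_insert_of_mem (mem_singleton_self _)
  have ha : ∀ e, e ≠ a → e ≠ b → e ≠ d → c a e ∈ s := fun e hea heb hed =>
    eq_of_not_hasPCPath hc hsym hab had hbd hea heb hed hprop ▸ hα
  have hd : ∀ e, e ≠ a → e ≠ b → e ≠ d → c d e ∈ s := fun e hea heb hed => by
    rw [eq_of_not_hasPCPath hc hsym hbd.symm had.symm hab.symm hed heb hea
      fun h => hprop (by rw [hsym a, hsym b d, h]), hsym]
    exact hβ
  have hout : ∀ e ∉ ({a, b, d} : Finset (Fin n)), ∀ f, f ≠ e → c e f ∈ s := by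
    intro e he f hfe
    obtain ⟨hea, heb, hed⟩ : e ≠ a ∧ e ≠ b ∧ e ≠ d := by simpa using he
    rcases eq_or_ne f a with rfl | hfa
    · exact hsym e f ▸ ha e hea heb hed
    rcases eq_or_ne f b with rfl | hfb
    · rw [hsym]
      exact mem_of_not_hasPCPath hc hbd.symm hed.symm had.symm heb.symm hab.symm hea
        (hsym d f ▸ hβ) (hsym a e ▸ ha e hea heb hed)
    rcases eq_or_ne f d with rfl | hfd
    · exact hsym e f ▸ hd e hea heb hed
    exact mem_of_not_hasPCPath hc hea.symm hfa.symm had hfe.symm hed hfd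
      (ha e hea heb hed) (hsym d f ▸ hd f hfa hfb hfd)
  have had' : c a d ∈ s := by
    obtain ⟨e, he⟩ := Fin.exists_notMem_of_card_lt {a, b, d} (by grind [card_le_three])
    obtain ⟨hea, heb, hed⟩ : e ≠ a ∧ e ≠ b ∧ e ≠ d := by simpa using he
    exact mem_of_not_hasPCPath hc hab.symm hbd heb.symm had hea.symm hed.symm (hsym a b ▸ hα)
      (hd e hea heb hed)
  by_cases hu : u ∉ ({a, b, d} : Finset (Fin n))
  · exact hout u hu v huv.symm
  by_cases hv : v ∉ ({a, b, d} : Finset (Fin n))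
  · exact hsym v u ▸ hout v hv u huv
  simp only [not_not, mem_insert, mem_singleton] at hu hv
  rcases hu with rfl | rfl | rfl <;> rcases hv with rfl | rfl | rfl <;>
    first | exact absurd rfl huv | assumption | exact hsym _ _ ▸ ‹_›

lemma exists_pair_of_not_hasPCPath (hn : 4 ≤ n) (hc : ¬ HasPCPath n 4 c)
    (hsym : ∀ i j, c i j = c j i) : ∃ α β, ∀ u v, u ≠ v → c u v ∈ ({α, β} : Finset ℕ) := by
  by_cases hP₃ : ∃ a b d, a ≠ b ∧ a ≠ d ∧ b ≠ d ∧ c a b ≠ c b d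
  · obtain ⟨a, b, d, hab, had, hbd, hprop⟩ := hP₃
    exact ⟨_, _, fun u v => mem_pair_of_not_hasPCPath hn hc hsym hab had hbd hprop⟩
  · push Not at hP₃
    let x : Fin n := ⟨0, by omega⟩
    let y : Fin n := ⟨1, by omega⟩
    refine ⟨c x y, c x y, fun u v huv => ?_⟩
    rw [eq_of_adjacent_edges_eq hsym hP₃ huv (by simp [x, y, Fin.ext_iff] : x ≠ y)]
    exact mem_insert_self _ _

end NoPCP4

/-- For every `n ≥ 4`, the maximum number of colors in an edge-coloring of `K_n`
with no properly colored `P_4` equals `2`. -/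
theorem pr_P4 (n : ℕ) (hn : 4 ≤ n) :
    IsGreatest {m : ℕ | ∃ c : Fin n → Fin n → ℕ, (∀ i j, c i j = c j i) ∧
      ¬ HasPCPath n 4 c ∧ colorsUsed n c = m} 2 := by
  refine ⟨⟨starColoring ⟨0, by omega⟩, starColoring_symm _, not_hasPCPath_starColoring _,
    colorsUsed_starColoring (by omega) _⟩, ?_⟩
  rintro m ⟨c, hsym, hc, rfl⟩
  obtain ⟨α, β, h⟩ := exists_pair_of_not_hasPCPath hn hc hsym
  exact (colorsUsed_le_card _ h).trans card_le_two
end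

section
/- For every n ≥ 5, the maximum number of colors in an edge-coloring of K_n with no properly colored path on 5 vertices equals 3. -/
/-!
The coloring `min i j 2` of `K_n` uses three colors, and a short case check shows that it has no
properly colored `P₅`: vertex `0` can only be an end of such a path, and an interior vertex
`v ≥ 2` needs a path neighbour in `{0, 1}`.

Conversely, let `c` have no properly colored `P₅`. If it has a properly colored path
`v₁ v₂ v₃ v₄`, every edge gets one of the colors of that path: an edge `v₄ w` leaving the path
extends it, so it must repeat the color of `v₃ v₄`, and the colors of the remaining edges are
pinned down in the same way, by putting them on suitable five-vertex paths built from `v₁, …, v₄`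
and vertices outside the path. Otherwise `c` has no properly colored `P₄`, and the same argument
one level down, with a properly colored `P₃`, shows that `c` uses at most two colors; a coloring
without properly colored `P₃` is monochromatic.
-/

open Cardinal

section PCPath

variable {V α : Type*} {c : V → V → α}

def IsPCPath (c : V → V → α) (l : List V) : Prop :=
  l.Nodup ∧ (l.zipWith c l.tail).IsChain (· ≠ ·)

def PCPathFree (c : V → V → α) (k : ℕ) : Prop :=
  ∀ l : List V, l.length = k → ¬IsPCPath c l

@[simp]
lemma isPCPath_pair {a b : V} : IsPCPath c [a, b] ↔ a ≠ b := by
  simp [IsPCPath]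

@[simp]
lemma isPCPath_cons_cons_cons {a b d : V} {l : List V} :
    IsPCPath c (a :: b :: d :: l) ↔ a ∉ b :: d :: l ∧ c a b ≠ c b d ∧ IsPCPath c (b :: d :: l) := by
  simp only [IsPCPath, List.nodup_cons, List.tail_cons, List.zipWith_cons_cons,
    List.isChain_cons_cons]
  tauto

lemma isPCPath_iff_getElem {l : List V} :
    IsPCPath c l ↔ l.Nodup ∧ ∀ i (h : i + 2 < l.length), c l[i] l[i + 1] ≠ c l[i + 1] l[i + 2] := by
  rw [IsPCPath, List.isChain_iff_getElem]
  simp only [List.length_zipWith, List.length_tail, List.getElem_zipWith, List.getElem_tail]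
  constructor <;> rintro ⟨hnd, h⟩ <;> exact ⟨hnd, fun i hi => h i (by omega)⟩

lemma hasPCPath_iff {n l : ℕ} {c : Fin n → Fin n → ℕ} :
    HasPCPath n l c ↔ ∃ L : List (Fin n), L.length = l ∧ IsPCPath c L := by
  simp only [isPCPath_iff_getElem]
  constructor
  · rintro ⟨p, hinj, hp⟩
    exact ⟨List.ofFn p, List.length_ofFn, List.nodup_ofFn.mpr hinj,
      fun i hi => by simpa using hp i (by simpa using hi)⟩
  · rintro ⟨L, rfl, hnd, hL⟩
    exact ⟨L.get, List.nodup_iff_injective_get.mp hnd, hL⟩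

lemma not_hasPCPath_iff {n l : ℕ} {c : Fin n → Fin n → ℕ} :
    ¬HasPCPath n l c ↔ PCPathFree c l := by
  simp [hasPCPath_iff, PCPathFree]

lemma exists_notMem_of_length_lt_of_le {l : List V} {k : ℕ} (hl : l.length < k) (hV : k ≤ #V) :
    ∃ w, w ∉ l :=
  exists_notMem_of_length_lt l ((Nat.cast_lt.mpr hl).trans_le hV)

variable (hc : ∀ u v, c u v = c v u)
include hc

lemma color_eq_of_pcPathFree_three (hfree : PCPathFree c 3) {x y u v : V} (hxy : x ≠ y)
    (huv : u ≠ v) : c x y = c u v := by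
  have adjacent : ∀ a b d, a ≠ b → b ≠ d → c a b = c b d := by
    intro a b d hab hbd
    rcases eq_or_ne a d with rfl | had
    · exact hc a b
    · simpa [hab, had, hbd] using hfree [a, b, d] rfl
  rcases eq_or_ne y u with rfl | hyu
  · exact adjacent x y v hxy huv
  · exact (adjacent x y u hxy hyu).trans (adjacent y u v hyu huv)

section PCPathFreeFour

variable (hfree : PCPathFree c 4) {x y z : V} (hp : IsPCPath c [x, y, z])
include hfree hp

lemma color_to_outside_of_pcPathFree_four {w : V} (hw : w ∉ [x, y, z]) :
    c x w = c x y ∧ (c y w = c x y ∨ c y w = c y z) ∧ c z w = c y z := by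
  have h₁ := hfree [w, x, y, z] rfl
  have h₂ := hfree [x, y, w, z] rfl
  have h₃ := hfree [x, y, z, w] rfl
  grind [isPCPath_cons_cons_cons, isPCPath_pair]

lemma color_mem_of_pcPathFree_four (hV : 4 ≤ #V) {u v : V} (huv : u ≠ v) :
    c u v = c x y ∨ c u v = c y z := by
  have outside := fun {w} (hw : w ∉ [x, y, z]) ↦
    color_to_outside_of_pcPathFree_four hc hfree hp hw
  obtain ⟨w, hw⟩ := exists_notMem_of_length_lt_of_le (l := [x, y, z]) (by simp) hV
  have chord : c x z = c x y ∨ c x z = c y z := by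
    have := outside hw
    have h := hfree [y, x, z, w] rfl
    grind [isPCPath_cons_cons_cons, isPCPath_pair]
  by_cases hu : u ∈ [x, y, z] <;> by_cases hv : v ∈ [x, y, z]
  · simp only [List.mem_cons, List.not_mem_nil, or_false] at hu hv
    grind
  · have := outside hv
    grind
  · have := outside hu
    grind
  · have := outside hu
    have := outside hv
    have h := hfree [x, u, v, z] rfl
    grind [isPCPath_cons_cons_cons, isPCPath_pair]

end PCPathFreeFour

section PCPathFreeFive

variable (hfree : PCPathFree c 5) {v₁ v₂ v₃ v₄ : V} (hp : IsPCPath c [v₁, v₂, v₃, v₄])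
include hfree hp

lemma color_to_outside_of_pcPathFree_five {w : V} (hw : w ∉ [v₁, v₂, v₃, v₄]) :
    c v₁ w = c v₁ v₂ ∧ (c v₂ w = c v₁ v₂ ∨ c v₂ w = c v₂ v₃) ∧
      (c v₃ w = c v₂ v₃ ∨ c v₃ w = c v₃ v₄) ∧ c v₄ w = c v₃ v₄ := by
  have h₁ := hfree [w, v₁, v₂, v₃, v₄] rfl
  have h₂ := hfree [v₁, w, v₂, v₃, v₄] rfl
  have h₃ := hfree [v₁, v₂, v₃, w, v₄] rfl
  have h₄ := hfree [v₁, v₂, v₃, v₄, w] rfl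
  grind [isPCPath_cons_cons_cons, isPCPath_pair]

lemma color_chords_of_pcPathFree_five {w : V} (hw : w ∉ [v₁, v₂, v₃, v₄]) :
    (c v₁ v₃ = c v₁ v₂ ∨ c v₁ v₃ = c v₂ v₃ ∨ c v₁ v₃ = c v₃ v₄) ∧
      (c v₁ v₄ = c v₁ v₂ ∨ c v₁ v₄ = c v₃ v₄) ∧
      (c v₂ v₄ = c v₁ v₂ ∨ c v₂ v₄ = c v₂ v₃ ∨ c v₂ v₄ = c v₃ v₄) := by
  have := color_to_outside_of_pcPathFree_five hc hfree hp hw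
  have h₁ := hfree [v₂, v₃, v₄, v₁, w] rfl
  have h₂ := hfree [v₄, v₁, v₃, v₂, w] rfl
  have h₃ := hfree [v₄, v₃, v₁, v₂, w] rfl
  have h₄ := hfree [v₁, v₂, v₄, v₃, w] rfl
  have h₅ := hfree [v₁, v₄, v₂, v₃, w] rfl
  grind [isPCPath_cons_cons_cons, isPCPath_pair]

lemma color_mem_of_pcPathFree_five (hV : 5 ≤ #V) {u v : V} (huv : u ≠ v) :
    c u v = c v₁ v₂ ∨ c u v = c v₂ v₃ ∨ c u v = c v₃ v₄ := by
  have outside := fun {w} (hw : w ∉ [v₁, v₂, v₃, v₄]) ↦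
    color_to_outside_of_pcPathFree_five hc hfree hp hw
  obtain ⟨w, hw⟩ := exists_notMem_of_length_lt_of_le (l := [v₁, v₂, v₃, v₄]) (by simp) hV
  have := color_chords_of_pcPathFree_five hc hfree hp hw
  by_cases hu : u ∈ [v₁, v₂, v₃, v₄] <;> by_cases hv : v ∈ [v₁, v₂, v₃, v₄]
  · simp only [List.mem_cons, List.not_mem_nil, or_false] at hu hv
    grind
  · have := outside hv
    grind
  · have := outside hu
    grind
  · have := outside hu
    have := outside hv
    have h₁ := hfree [v₁, v₂, v₃, u, v] rfl
    have h₂ := hfree [v₁, v, u, v₃, v₄] rfl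
    grind [isPCPath_cons_cons_cons, isPCPath_pair]

end PCPathFreeFive

theorem exists_card_le_one_of_pcPathFree_three (hfree : PCPathFree c 3) :
    ∃ S : Finset α, S.card ≤ 1 ∧ ∀ u v, u ≠ v → c u v ∈ S := by
  by_cases hV : ∃ x y : V, x ≠ y
  · obtain ⟨x, y, hxy⟩ := hV
    exact ⟨{c x y}, by simp, fun u v huv => by
      simpa using color_eq_of_pcPathFree_three hc hfree huv hxy⟩
  · exact ⟨∅, by simp, fun u v huv => (hV ⟨u, v, huv⟩).elim⟩

theorem exists_card_le_two_of_pcPathFree_four [DecidableEq α] (hV : 4 ≤ #V)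
    (hfree : PCPathFree c 4) :
    ∃ S : Finset α, S.card ≤ 2 ∧ ∀ u v, u ≠ v → c u v ∈ S := by
  by_cases h₃ : PCPathFree c 3
  · obtain ⟨S, hS, hcS⟩ := exists_card_le_one_of_pcPathFree_three hc h₃
    exact ⟨S, by omega, hcS⟩
  obtain ⟨l, hl, hp⟩ : ∃ l : List V, l.length = 3 ∧ IsPCPath c l := by
    simpa [PCPathFree] using h₃
  obtain ⟨x, y, z, rfl⟩ := List.length_eq_three.mp hl
  refine ⟨{c x y, c y z}, Finset.card_le_two, fun u v huv => ?_⟩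
  simpa using color_mem_of_pcPathFree_four hc hfree hp hV huv

theorem exists_card_le_three_of_pcPathFree_five [DecidableEq α] (hV : 5 ≤ #V)
    (hfree : PCPathFree c 5) :
    ∃ S : Finset α, S.card ≤ 3 ∧ ∀ u v, u ≠ v → c u v ∈ S := by
  by_cases h₄ : PCPathFree c 4
  · obtain ⟨S, hS, hcS⟩ := exists_card_le_two_of_pcPathFree_four hc (le_trans (by norm_num) hV) h₄
    exact ⟨S, by omega, hcS⟩
  obtain ⟨l, hl, hp⟩ : ∃ l : List V, l.length = 4 ∧ IsPCPath c l := by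
    simpa [PCPathFree] using h₄
  obtain ⟨v₁, v₂, v₃, v₄, rfl⟩ := List.length_eq_four.mp hl
  refine ⟨{c v₁ v₂, c v₂ v₃, c v₃ v₄}, Finset.card_le_three, fun u v huv => ?_⟩
  simpa using color_mem_of_pcPathFree_five hc hfree hp hV huv

end PCPath

lemma colorsUsed_le_card_s2 {n : ℕ} {c : Fin n → Fin n → ℕ} {S : Finset ℕ}
    (h : ∀ i j, i ≠ j → c i j ∈ S) : colorsUsed n c ≤ S.card := by
  refine Finset.card_le_card fun k hk => ?_
  obtain ⟨⟨i, j⟩, hij, rfl⟩ := Finset.mem_image.mp hk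
  exact h i j (Finset.mem_filter.mp hij).2

def minColoring (n : ℕ) : Fin n → Fin n → ℕ := fun i j => min (min i j) 2

lemma pcPathFree_minColoring (n : ℕ) : PCPathFree (minColoring n) 5 := by
  intro l hl
  obtain ⟨a, b, d, e, f, rfl⟩ : ∃ a b d e f, l = [a, b, d, e, f] := by
    match l, hl with | [a, b, d, e, f], _ => exact ⟨a, b, d, e, f, rfl⟩
  simp [minColoring, ← Fin.val_inj]
  omega

lemma colorsUsed_minColoring {n : ℕ} (hn : 4 ≤ n) : colorsUsed n (minColoring n) = 3 := by
  rw [colorsUsed, ← Finset.card_range 3]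
  congr 1
  ext k
  simp [minColoring, ← Fin.val_inj]
  constructor
  · rintro ⟨i, j, -, rfl⟩
    omega
  · intro hk
    exact ⟨⟨k, by omega⟩, ⟨k + 1, by omega⟩, by simp, by simp; omega⟩

/-- For every `n ≥ 5`, the maximum number of colors in an edge-coloring of `K_n`
with no properly colored `P_5` equals `3`. -/
theorem pr_P5 (n : ℕ) (hn : 5 ≤ n) :
    IsGreatest {m : ℕ | ∃ c : Fin n → Fin n → ℕ, (∀ i j, c i j = c j i) ∧
      ¬ HasPCPath n 5 c ∧ colorsUsed n c = m} 3 := by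
  refine ⟨⟨minColoring n, fun i j => by simp only [minColoring, min_comm],
    not_hasPCPath_iff.mpr (pcPathFree_minColoring n), colorsUsed_minColoring (by omega)⟩, ?_⟩
  rintro m ⟨c, hc, hfree, rfl⟩
  obtain ⟨S, hS, hcS⟩ := exists_card_le_three_of_pcPathFree_five hc (by simpa using hn)
    (not_hasPCPath_iff.mp hfree)
  exact (colorsUsed_le_card_s2 hcS).trans hS
end

section
/- Let l ≥ 3 with l ≡ r_l (mod 3), 0 ≤ r_l ≤ 2, and n ≥ l. Then pr(K_n, P_l) ≥ max{ C(l-3,2) + 1, (⌊l/3⌋ - 1)·n - C(⌊l/3⌋,2) + 1 + r_l }, i.e., there exists an edge-coloring of K_n with that many colors containing no properly colored path on l vertices. -/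
/-!
Two colourings. In the first, the vertices `0, …, l - 4` span a rainbow clique and every other
edge gets colour `0`; an interior vertex of a path outside the clique sees colour `0` twice, so a
properly coloured path has at most `l - 3` interior vertices.

In the second, with `a = ⌊l/3⌋ - 1` and `r = l % 3`, every edge at one of the vertices
`0, …, a - 1` gets its own colour, and an edge between two vertices `≥ a` is coloured by its
smaller endpoint `v`: a private colour if `v < a + r`, the common colour `0` otherwise. A properly
coloured path has no interior local minimum among the vertices `≥ a`, so between two visits to
`[0, a)` it meets at most two (consecutive) vertices `≥ a + r`. Hence it has at most `a + r`
vertices below `a + r` and `2 (a + 1)` above, fewer than `l`.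
-/

open Finset

def IsPCSeq (c : ℕ → ℕ → ℕ) (l : ℕ) (q : ℕ → ℕ) : Prop :=
  Set.InjOn q (Set.Iio l) ∧ ∀ j, j + 2 < l → c (q j) (q (j + 1)) ≠ c (q (j + 1)) (q (j + 2))

theorem HasPCPath.exists_isPCSeq {n l : ℕ} {c : ℕ → ℕ → ℕ}
    (h : HasPCPath n l fun i j => c i j) : ∃ q, IsPCSeq c l q := by
  obtain ⟨p, hinj, hproper⟩ := h
  refine ⟨fun j => if hj : j < l then p ⟨j, hj⟩ else 0, ?_, fun j hj => ?_⟩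
  · intro j hj j' hj' he
    simp only [Set.mem_Iio] at hj hj'
    simpa [hj, hj', Fin.val_inj, hinj.eq_iff] using he
  · simpa [show j < l by omega, show j + 1 < l by omega, hj] using hproper j hj

theorem card_filter_lt_le_of_injOn {l k : ℕ} {q : ℕ → ℕ} (hq : Set.InjOn q (Set.Iio l)) :
    #((range l).filter (q · < k)) ≤ k := by
  simpa using card_le_card_of_injOn (t := range k) q
    (fun j hj => by simp_all) (hq.mono fun j hj => by simp_all)

/-- Counting the points of `R` below `j` and the parity of `j` separates the points of `P`. -/
theorem card_le_two_mul_card_add_one {P R : Finset ℕ}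
    (h : ∀ j ∈ P, ∀ j' ∈ P, j + 2 ≤ j' → ∃ k ∈ R, j < k ∧ k < j') : #P ≤ 2 * (#R + 1) := by
  let f : ℕ → ℕ × ℕ := fun j => (#(R.filter (· < j)), j % 2)
  have hmaps : Set.MapsTo f P (range (#R + 1) ×ˢ range 2 : Finset (ℕ × ℕ)) := fun j _ => by
    simpa [f] using ⟨card_filter_le _ _, Nat.le_of_lt_succ (Nat.mod_lt j two_pos)⟩
  have hinj : Set.InjOn f P := by
    suffices key : ∀ j ∈ P, ∀ j' ∈ P, j < j' → f j ≠ f j' by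
      intro j hj j' hj' he
      by_contra hne
      rcases Nat.lt_or_gt_of_ne hne with hlt | hlt
      exacts [key j hj j' hj' hlt he, key j' hj' j hj hlt he.symm]
    intro j hj j' hj' hlt he
    simp only [f, Prod.ext_iff] at he
    obtain ⟨k, hk, hjk, hkj'⟩ := h j hj j' hj' (by omega)
    refine he.1.not_lt (card_lt_card ⟨fun x hx => ?_, fun hsub => ?_⟩)
    · rw [mem_filter] at hx ⊢
      exact ⟨hx.1, hx.2.trans hlt⟩
    · simpa using (mem_filter.1 (hsub (mem_filter.2 ⟨hk, hkj'⟩))).2.trans hjk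
  simpa [mul_comm] using card_le_card_of_injOn f hmaps hinj

/-- The minimum of `q` on `[j, j']` cannot be interior, since both its edges would have colour
`φ (q i)`; at an endpoint it puts the whole stretch into `[b, ∞)`, where consecutive edges share
a colour. -/
theorem IsPCSeq.exists_lt_between {c : ℕ → ℕ → ℕ} {φ : ℕ → ℕ} {l a b : ℕ} {q : ℕ → ℕ}
    (hq : IsPCSeq c l q) (hc : ∀ x y, x ≠ y → a ≤ min x y → c x y = φ (min x y))
    (hφ : ∀ v w, b ≤ v → b ≤ w → φ v = φ w) {j j' : ℕ} (hjj' : j + 2 ≤ j') (hj' : j' < l)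
    (hbj : b ≤ q j) (hbj' : b ≤ q j') : ∃ k, j ≤ k ∧ k ≤ j' ∧ q k < a := by
  by_contra! hB
  have hqne : ∀ k k', k ≤ j' → k' ≤ j' → k ≠ k' → q k ≠ q k' := fun k k' hk hk' =>
    mt (hq.1 (Set.mem_Iio.2 (by omega)) (Set.mem_Iio.2 (by omega)))
  have hcol : ∀ k, j ≤ k → k < j' → c (q k) (q (k + 1)) = φ (min (q k) (q (k + 1))) :=
    fun k hk hk' => hc _ _ (hqne _ _ (by omega) (by omega) (by omega))
      (le_min (hB _ hk (by omega)) (hB _ (by omega) (by omega)))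
  obtain ⟨i, hi, hmin⟩ := exists_min_image (Icc j j') q ⟨j, mem_Icc.2 ⟨le_rfl, by omega⟩⟩
  simp only [mem_Icc] at hi hmin
  by_cases hint : j < i ∧ i < j'
  · obtain ⟨k, rfl⟩ : ∃ k, i = k + 1 := ⟨i - 1, by omega⟩
    refine hq.2 k (by omega) ?_
    rw [hcol k (by omega) (by omega), hcol (k + 1) (by omega) (by omega),
      min_eq_right (hmin k (by omega)), min_eq_left (hmin (k + 2) (by omega))]
  · have hbi : b ≤ q i := by rcases (by omega : i = j ∨ i = j') with rfl | rfl <;> assumption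
    have hb : ∀ k, j ≤ k → k ≤ j' → b ≤ q k := fun k hk hk' => hbi.trans (hmin k ⟨hk, hk'⟩)
    refine hq.2 j (by omega) ?_
    rw [hcol j le_rfl (by omega), hcol (j + 1) (by omega) (by omega)]
    exact hφ _ _ (le_min (hb j le_rfl (by omega)) (hb (j + 1) (by omega) (by omega)))
      (le_min (hb (j + 1) (by omega) (by omega)) (hb (j + 2) (by omega) (by omega)))

def rainbowCliqueColoring (m x y : ℕ) : ℕ :=
  if max x y < m then Nat.pair (min x y) (max x y) + 1 else 0

theorem rainbowCliqueColoring_comm (m x y : ℕ) :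
    rainbowCliqueColoring m x y = rainbowCliqueColoring m y x := by
  simp only [rainbowCliqueColoring, min_comm, max_comm]

theorem IsPCSeq.length_le_of_rainbowClique {m l : ℕ} {q : ℕ → ℕ}
    (hq : IsPCSeq (rainbowCliqueColoring m) l q) : l ≤ m + 2 := by
  have hinterior : Ioo 0 (l - 1) ⊆ (range l).filter (q · < m) := by
    intro j hj
    obtain ⟨k, rfl⟩ : ∃ k, j = k + 1 := ⟨j - 1, by rw [mem_Ioo] at hj; omega⟩
    simp only [mem_Ioo, mem_filter, mem_range] at hj ⊢
    refine ⟨by omega, lt_of_not_ge fun hm => hq.2 k (by omega) ?_⟩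
    rw [rainbowCliqueColoring, rainbowCliqueColoring, if_neg (by omega), if_neg (by omega)]
  have := (card_le_card hinterior).trans (card_filter_lt_le_of_injOn hq.1)
  simp only [Nat.card_Ioo] at this
  omega

def rainbowStarColoring (a r x y : ℕ) : ℕ :=
  if min x y < a then Nat.pair (min x y) (max x y) + r + 1
  else if min x y < a + r then min x y - a + 1 else 0

theorem rainbowStarColoring_comm (a r x y : ℕ) :
    rainbowStarColoring a r x y = rainbowStarColoring a r y x := by
  simp only [rainbowStarColoring, min_comm, max_comm]

theorem IsPCSeq.length_le_of_rainbowStar {a r l : ℕ} {q : ℕ → ℕ}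
    (hq : IsPCSeq (rainbowStarColoring a r) l q) : l ≤ 3 * a + r + 2 := by
  set R := (range l).filter (q · < a)
  set P := (range l).filter fun j => ¬q j < a + r
  have hP : #P ≤ 2 * (#R + 1) := by
    refine card_le_two_mul_card_add_one fun j hj j' hj' hjj' => ?_
    simp only [P, mem_filter, mem_range, not_lt] at hj hj'
    obtain ⟨k, hjk, hkj', hk⟩ := hq.exists_lt_between (a := a) (b := a + r)
      (φ := fun v => if v < a + r then v - a + 1 else 0)
      (fun x y _ hxy => by simp [rainbowStarColoring, hxy.not_gt])
      (fun v w hv hw => by simp [hv.not_gt, hw.not_gt]) hjj' hj'.1 hj.2 hj'.2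
    have hk_ne : k ≠ j := by rintro rfl; omega
    have hk_ne' : k ≠ j' := by rintro rfl; omega
    exact ⟨k, mem_filter.2 ⟨mem_range.2 (by omega), hk⟩, by omega, by omega⟩
  have hR : #R ≤ a := card_filter_lt_le_of_injOn hq.1
  have hS : #((range l).filter (q · < a + r)) ≤ a + r := card_filter_lt_le_of_injOn hq.1
  have hsplit : #((range l).filter (q · < a + r)) + #P = l :=
    (card_filter_add_card_filter_not _).trans (card_range l)
  omega

theorem card_le_colorsUsed {n : ℕ} {c : ℕ → ℕ → ℕ} {S : Finset ℕ}
    (hS : ∀ k ∈ S, ∃ x y, x < y ∧ y < n ∧ c x y = k) : #S ≤ colorsUsed n fun i j => c i j := by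
  refine card_le_card fun k hk => ?_
  obtain ⟨x, y, hxy, hy, rfl⟩ := hS k hk
  exact mem_image.2 ⟨(⟨x, by omega⟩, ⟨y, hy⟩), by simp only [mem_filter, mem_univ, ne_eq, Fin.ext_iff, true_and]; omega, rfl⟩

theorem sum_range_sub_sub_one_add_choose {a n : ℕ} (h : a ≤ n) :
    ∑ x ∈ range a, (n - x - 1) + (a + 1).choose 2 = a * n := by
  induction a with
  | zero => simp
  | succ a ih =>
    have hpascal : (a + 1 + 1).choose 2 = (a + 1).choose 2 + (a + 1) := by
      rw [Nat.choose_succ_succ', Nat.choose_one_right, add_comm]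
    rw [sum_range_succ, hpascal, add_mul, one_mul, ← ih (by omega)]
    omega

theorem sum_range_sub_sub_one (m : ℕ) : ∑ x ∈ range m, (m - x - 1) = m.choose 2 := by
  rw [Nat.choose_two_right, ← sum_range_id]
  conv_rhs => rw [← sum_range_reflect]
  exact sum_congr rfl fun x _ => by omega

theorem pair_add_injOn_sigma (a n k : ℕ) :
    Set.InjOn (fun p : (_ : ℕ) × ℕ => Nat.pair p.1 p.2 + k) ((range a).sigma fun x => Ioo x n) := by
  rintro ⟨x, y⟩ - ⟨x', y'⟩ - h
  obtain ⟨rfl, rfl⟩ := Nat.pair_eq_pair.1 (Nat.add_right_cancel h)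
  rfl

theorem le_colorsUsed_rainbowClique {m n : ℕ} (h : m + 2 ≤ n) :
    m.choose 2 + 1 ≤ colorsUsed n fun i j => rainbowCliqueColoring m i j := by
  set E := (range m).sigma fun x => Ioo x m
  have hcard : #(insert 0 (E.image fun p => Nat.pair p.1 p.2 + 1)) = m.choose 2 + 1 := by
    rw [card_insert_of_notMem (by simp), card_image_of_injOn (pair_add_injOn_sigma m m 1),
      card_sigma]
    simp only [Nat.card_Ioo, sum_range_sub_sub_one]
  rw [← hcard]
  refine card_le_colorsUsed fun k hk => ?_
  simp only [E, mem_insert, mem_image, mem_sigma, mem_range, mem_Ioo, Sigma.exists] at hk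
  rcases hk with rfl | ⟨x, y, ⟨hx, hxy, hy⟩, rfl⟩
  · exact ⟨m, m + 1, by omega, by omega, by simp [rainbowCliqueColoring]⟩
  · refine ⟨x, y, hxy, by omega, ?_⟩
    simp [rainbowCliqueColoring, hy, hxy.le]

theorem le_colorsUsed_rainbowStar {a r n : ℕ} (h : a + r + 2 ≤ n) :
    a * n - (a + 1).choose 2 + 1 + r ≤ colorsUsed n fun i j => rainbowStarColoring a r i j := by
  set E := (range a).sigma fun x => Ioo x n
  have hdisj : Disjoint (range (r + 1)) (E.image fun p => Nat.pair p.1 p.2 + (r + 1)) := by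
    simp only [disjoint_left, mem_range, mem_image, not_exists, not_and]
    intro k hk p _ hp
    omega
  have hcard : #(range (r + 1) ∪ E.image fun p => Nat.pair p.1 p.2 + (r + 1)) =
      a * n - (a + 1).choose 2 + 1 + r := by
    rw [card_union_of_disjoint hdisj, card_image_of_injOn (pair_add_injOn_sigma a n _),
      card_sigma, card_range]
    have := sum_range_sub_sub_one_add_choose (show a ≤ n by omega)
    simp only [Nat.card_Ioo]
    omega
  rw [← hcard]
  refine card_le_colorsUsed fun k hk => ?_
  simp only [E, mem_union, mem_image, mem_sigma, mem_range, mem_Ioo, Sigma.exists] at hk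
  rcases hk with hk | ⟨x, y, ⟨hx, hxy, hy⟩, rfl⟩
  · rcases Nat.eq_zero_or_pos k with rfl | hk0
    · exact ⟨a + r, a + r + 1, by omega, by omega, by simp [rainbowStarColoring]⟩
    · refine ⟨a + k - 1, a + k, by omega, by omega, ?_⟩
      rw [rainbowStarColoring, if_neg (by omega), if_pos (by omega)]
      omega
  · refine ⟨x, y, hxy, hy, ?_⟩
    rw [rainbowStarColoring, min_eq_left hxy.le, max_eq_right hxy.le, if_pos hx, add_assoc]

theorem not_hasPCPath_rainbowClique {n l : ℕ} (hl : 3 ≤ l) :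
    ¬HasPCPath n l fun i j => rainbowCliqueColoring (l - 3) i j := fun h => by
  obtain ⟨q, hq⟩ := h.exists_isPCSeq
  have := hq.length_le_of_rainbowClique
  omega

theorem not_hasPCPath_rainbowStar {n l : ℕ} (hl : 3 ≤ l) :
    ¬HasPCPath n l fun i j => rainbowStarColoring (l / 3 - 1) (l % 3) i j := fun h => by
  obtain ⟨q, hq⟩ := h.exists_isPCSeq
  have := hq.length_le_of_rainbowStar
  omega

/-- Lower bound for `pr(K_n, P_l)`: there is an edge-coloring of `K_n` with at least
`max { C(l-3,2)+1, (⌊l/3⌋-1)n - C(⌊l/3⌋,2) + 1 + r_l }` colors and no properly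
colored `P_l`, where `l ≡ r_l (mod 3)`. -/
theorem pr_path_lower (l n : ℕ) (hl : 3 ≤ l) (hn : l ≤ n) :
    ∃ c : Fin n → Fin n → ℕ, (∀ i j, c i j = c j i) ∧ ¬ HasPCPath n l c ∧
      max (Nat.choose (l - 3) 2 + 1)
        ((l / 3 - 1) * n - Nat.choose (l / 3) 2 + 1 + l % 3) ≤ colorsUsed n c := by
  rcases le_total (Nat.choose (l - 3) 2 + 1)
      ((l / 3 - 1) * n - Nat.choose (l / 3) 2 + 1 + l % 3) with hle | hle
  · refine ⟨fun i j => rainbowStarColoring (l / 3 - 1) (l % 3) i j,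
      fun i j => rainbowStarColoring_comm _ _ _ _, not_hasPCPath_rainbowStar hl, ?_⟩
    rw [max_eq_right hle]
    simpa [show l / 3 - 1 + 1 = l / 3 by omega] using
      le_colorsUsed_rainbowStar (a := l / 3 - 1) (r := l % 3) (n := n) (by omega)
  · refine ⟨fun i j => rainbowCliqueColoring (l - 3) i j,
      fun i j => rainbowCliqueColoring_comm _ _ _, not_hasPCPath_rainbowClique hl, ?_⟩
    rw [max_eq_left hle]
    exact le_colorsUsed_rainbowClique (by omega)
end

section
/- For every n ≥ 4, the maximum number of colors in an edge-coloring of K_n with no properly colored copy of K_4 minus an edge equals ⌊3(n-1)/2⌋. -/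
/-- The edge-colored `K_n` contains a properly colored copy of `K_4` minus an edge
(on vertices `x y z w` with the edge `zw` missing): any two adjacent edges of the
copy receive distinct colors. -/
def HasPCK4minus (n : ℕ) (c : Fin n → Fin n → ℕ) : Prop :=
  ∃ x y z w : Fin n, x ≠ y ∧ x ≠ z ∧ x ≠ w ∧ y ≠ z ∧ y ≠ w ∧ z ≠ w ∧
    c x y ≠ c x z ∧ c x y ≠ c x w ∧ c x z ≠ c x w ∧
    c x y ≠ c y z ∧ c x y ≠ c y w ∧ c y z ≠ c y w ∧
    c x z ≠ c y z ∧ c x w ≠ c y w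

/-!
The edges going down from a vertex `j` of `K_n` on `{0, …, n-1}` get one color, except that
for `j = 2k+2` the edge to `2k+1` gets a second one; this uses `⌊3(n-1)/2⌋` colors. In a
properly colored `K₄⁻` the top vertex would then have degree 2 in the copy and be joined to its
partner `2k+1`, which has degree 3 and two edges of one color going down.

Conversely, let `V` be a minimal vertex set with more colors. Deleting a vertex `v`, resp. two
vertices `u, v`, loses at least 2, resp. 4, colors, so that many colors are exclusive to `v`
(all their edges meet `v`), resp. to `{u, v}`. A vertex and an exclusive color with the fewest
edges at it give a color class consisting of one edge `uv`. The second exclusive colors of `u`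
and `v` can be taken on edges `ut`, `vt` with a common end, and then every edge of a fourth
color exclusive to `{u, v}` closes a properly colored `K₄⁻`.
-/

open Finset

section Configurations

variable {α κ : Type*} {c : α → α → κ} {V : Finset α}

def IsPCK4minus (c : α → α → κ) (x y z w : α) : Prop :=
  x ≠ y ∧ x ≠ z ∧ x ≠ w ∧ y ≠ z ∧ y ≠ w ∧ z ≠ w ∧
    c x y ≠ c x z ∧ c x y ≠ c x w ∧ c x z ≠ c x w ∧
    c x y ≠ c y z ∧ c x y ≠ c y w ∧ c y z ≠ c y w ∧
    c x z ≠ c y z ∧ c x w ≠ c y w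

theorem IsPCK4minus.of_comp {β : Type*} {f : β → α} (hf : Function.Injective f) {x y z w : β}
    (h : IsPCK4minus (fun i j => c (f i) (f j)) x y z w) :
    IsPCK4minus c (f x) (f y) (f z) (f w) := by
  obtain ⟨hxy, hxz, hxw, hyz, hyw, hzw, h⟩ := h
  exact ⟨hf.ne hxy, hf.ne hxz, hf.ne hxw, hf.ne hyz, hf.ne hyw, hf.ne hzw, h⟩

def IsPCK4minusFreeOn (c : α → α → κ) (V : Finset α) : Prop :=
  ∀ x ∈ V, ∀ y ∈ V, ∀ z ∈ V, ∀ w ∈ V, ¬ IsPCK4minus c x y z w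

theorem IsPCK4minusFreeOn.mono {W : Finset α} (h : IsPCK4minusFreeOn c V) (hWV : W ⊆ V) :
    IsPCK4minusFreeOn c W :=
  fun x hx y hy z hz w hw => h x (hWV hx) y (hWV hy) z (hWV hz) w (hWV hw)

def IsExclusive (c : α → α → κ) (V S : Finset α) (t : κ) : Prop :=
  ∀ i ∈ V, ∀ j ∈ V, i ≠ j → c i j = t → i ∈ S ∨ j ∈ S

theorem IsExclusive.apply_ne {S : Finset α} {t : κ} (h : IsExclusive c V S t) {i j : α}
    (hi : i ∈ V) (hj : j ∈ V) (hij : i ≠ j) (hiS : i ∉ S) (hjS : j ∉ S) : c i j ≠ t :=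
  fun hc => (h i hi j hj hij hc).elim hiS hjS

theorem IsExclusive.apply_ne_of_ne {v : α} {t : κ} (h : IsExclusive c V {v} t) {i j : α}
    (hi : i ∈ V) (hj : j ∈ V) (hij : i ≠ j) (hiv : i ≠ v) (hjv : j ≠ v) : c i j ≠ t :=
  h.apply_ne hi hj hij (notMem_singleton.2 hiv) (notMem_singleton.2 hjv)

theorem IsPCK4minusFreeOn.eq_or_eq_of_isExclusive (hPC : IsPCK4minusFreeOn c V) {u a b t : α}
    (hu : u ∈ V) (ha : a ∈ V) (hb : b ∈ V) (ht : t ∈ V)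
    (hua : u ≠ a) (hub : u ≠ b) (hut : u ≠ t) (hab : a ≠ b) (hat : a ≠ t) (hbt : b ≠ t)
    (hα : IsExclusive c V {u} (c u a)) (hβ : IsExclusive c V {u} (c u b)) (hαβ : c u a ≠ c u b)
    (hμ : IsExclusive c V {a} (c a t)) (hμb : c a t ≠ c a b) :
    c u t = c u a ∨ c u t = c u b := by
  by_contra! h
  exact hPC u hu a ha b hb t ht ⟨hua, hub, hut, hab, hat, hbt, hαβ, h.1.symm, h.2.symm,
    (hα.apply_ne_of_ne ha hb hab hua.symm hub.symm).symm,
    (hα.apply_ne_of_ne ha ht hat hua.symm hut.symm).symm, hμb.symm,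
    (hβ.apply_ne_of_ne ha hb hab hua.symm hub.symm).symm,
    hμ.apply_ne_of_ne hu ht hut hua hat.symm⟩

theorem IsPCK4minusFreeOn.false_of_isExclusive_cherries (hsym : ∀ i j, c i j = c j i)
    (hPC : IsPCK4minusFreeOn c V) {u a t s : α} (hu : u ∈ V) (ha : a ∈ V) (ht : t ∈ V)
    (hs : s ∈ V) (hua : u ≠ a) (hut : u ≠ t) (hus : u ≠ s) (hat : a ≠ t) (has : a ≠ s)
    (hts : t ≠ s) (hα : IsExclusive c V {u} (c u a)) (hβ : IsExclusive c V {u} (c u t))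
    (hαβ : c u a ≠ c u t) (hμ : IsExclusive c V {a} (c a t))
    (hμ' : IsExclusive c V {a} (c a s)) (hμμ' : c a t ≠ c a s) : False := by
  have h := hPC a ha t ht u hu s hs
  rw [IsPCK4minus, hsym a u, hsym t u] at h
  exact h ⟨hat, hua.symm, has, hut.symm, hts, hus,
    hα.apply_ne_of_ne ha ht hat hua.symm hut.symm, hμμ',
    (hα.apply_ne_of_ne ha hs has hua.symm hus.symm).symm,
    hβ.apply_ne_of_ne ha ht hat hua.symm hut.symm,
    (hμ.apply_ne_of_ne ht hs hts hat.symm has.symm).symm,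
    (hβ.apply_ne_of_ne ht hs hts hut.symm hus.symm).symm, hαβ,
    (hμ'.apply_ne_of_ne ht hs hts hat.symm has.symm).symm⟩

theorem IsPCK4minusFreeOn.eq_or_eq_of_isExclusive_edge (hPC : IsPCK4minusFreeOn c V)
    {u v s s' : α} (hu : u ∈ V) (hv : v ∈ V) (hs : s ∈ V) (hs' : s' ∈ V)
    (huv : u ≠ v) (hus : u ≠ s) (hus' : u ≠ s') (hvs : v ≠ s) (hvs' : v ≠ s') (hss' : s ≠ s')
    (hπu : IsExclusive c V {u} (c u v)) (hπv : IsExclusive c V {v} (c u v))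
    (hσ : IsExclusive c V {u} (c u s)) (hσπ : c u s ≠ c u v)
    (hσ' : IsExclusive c V {v} (c v s')) (hσ'π : c v s' ≠ c u v) :
    c u s' = c u s ∨ c v s = c v s' := by
  by_contra! h
  exact hPC u hu v hv s hs s' hs' ⟨huv, hus, hus', hvs, hvs', hss', hσπ.symm,
    (hπv.apply_ne_of_ne hu hs' hus' huv hvs'.symm).symm, h.1.symm,
    (hπu.apply_ne_of_ne hv hs hvs huv.symm hus.symm).symm, hσ'π.symm, h.2,
    (hσ.apply_ne_of_ne hv hs hvs huv.symm hus.symm).symm,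
    hσ'.apply_ne_of_ne hu hs' hus' huv hvs'.symm⟩

theorem IsPCK4minusFreeOn.false_of_crossing (hPC : IsPCK4minusFreeOn c V) {u v x y : α}
    (hu : u ∈ V) (hv : v ∈ V) (hx : x ∈ V) (hy : y ∈ V)
    (huv : u ≠ v) (hux : u ≠ x) (huy : u ≠ y) (hvx : v ≠ x) (hvy : v ≠ y) (hxy : x ≠ y)
    {π τ : κ} (hπ : c u v = π) (hπu : IsExclusive c V {u} π) (hπv : IsExclusive c V {v} π)
    (hτπ : τ ≠ π) (hτx : c u x = τ) (hτy : c v y = τ) (hy' : c u y ≠ τ) (hx' : c v x ≠ τ) :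
    False := by
  subst hπ hτx
  exact hPC u hu v hv x hx y hy ⟨huv, hux, huy, hvx, hvy, hxy, hτπ.symm,
    (hπv.apply_ne_of_ne hu hy huy huv hvy.symm).symm, hy'.symm,
    (hπu.apply_ne_of_ne hv hx hvx huv.symm hux.symm).symm, hτy ▸ hτπ.symm, hτy ▸ hx',
    hx'.symm, hτy ▸ hy'⟩

theorem IsPCK4minusFreeOn.eq_or_eq_of_common_base (hsym : ∀ i j, c i j = c j i)
    (hPC : IsPCK4minusFreeOn c V) {u v s x : α} (hu : u ∈ V) (hv : v ∈ V) (hs : s ∈ V)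
    (hx : x ∈ V) (huv : u ≠ v) (hus : u ≠ s) (hux : u ≠ x) (hvs : v ≠ s) (hvx : v ≠ x)
    (hsx : s ≠ x) {π σ σ' τ : κ} (hπ : c u v = π) (hσ : c u s = σ)
    (hσex : IsExclusive c V {u} σ) (hσ' : c v s = σ') (hτ : c u x = τ) (hσπ : σ ≠ π)
    (hσ'π : σ' ≠ π) (hσσ' : σ ≠ σ') (hτπ : τ ≠ π) (hτσ : τ ≠ σ) :
    c s x = σ' ∨ c s x = τ := by
  subst hπ hσ hσ' hτ
  by_contra! h
  have h' := hPC u hu s hs v hv x hx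
  rw [IsPCK4minus, hsym s v] at h'
  exact h' ⟨hus, huv, hux, hvs.symm, hsx, hvx, hσπ, hτσ.symm, hτπ.symm, hσσ',
    (hσex.apply_ne_of_ne hs hx hsx hus.symm hux.symm).symm, h.1.symm, hσ'π.symm, h.2.symm⟩

theorem false_of_common_witness [DecidableEq α] (hsym : ∀ i j, c i j = c j i)
    (hPC : IsPCK4minusFreeOn c V)
    {u v t x : α} (hu : u ∈ V) (hv : v ∈ V) (ht : t ∈ V) (hx : x ∈ V) (huv : u ≠ v)
    (hut : u ≠ t) (hvt : v ≠ t) (hux : u ≠ x) (hvx : v ≠ x) {π τ : κ} (hπ : c u v = π)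
    (hσ : IsExclusive c V {u} (c u t)) (hσ' : IsExclusive c V {v} (c v t)) (hσπ : c u t ≠ π)
    (hσ'π : c v t ≠ π) (hτ : IsExclusive c V {u, v} τ) (hτπ : τ ≠ π) (hτσ : τ ≠ c u t)
    (hτσ' : τ ≠ c v t) (hxu : c u x = τ) (hxv : c v x = τ) : False := by
  have htx : t ≠ x := by rintro rfl; exact hτσ hxu.symm
  have hσσ' : c u t ≠ c v t := (hσ.apply_ne_of_ne hv ht hvt huv.symm hut.symm).symm
  have htxτ : c t x ≠ τ := hτ.apply_ne ht hx htx (by simp [hut.symm, hvt.symm])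
    (by simp [hux.symm, hvx.symm])
  rcases hPC.eq_or_eq_of_common_base hsym hu hv ht hx huv hut hux hvt hvx htx hπ rfl hσ rfl hxu
    hσπ hσ'π hσσ' hτπ hτσ with h₁ | h₁
  · rcases hPC.eq_or_eq_of_common_base hsym hv hu ht hx huv.symm hvt hvx hut hux htx
      ((hsym v u).trans hπ) rfl hσ' rfl hxv hσ'π hσπ hσσ'.symm hτπ hτσ' with h₂ | h₂
    · exact hσσ' (h₂.symm.trans h₁)
    · exact htxτ h₂
  · exact htxτ h₁

theorem isExclusive_of_witness [DecidableEq α] (hsym : ∀ i j, c i j = c j i)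
    (hPC : IsPCK4minusFreeOn c V)
    {u v t w : α} (hu : u ∈ V) (hv : v ∈ V) (ht : t ∈ V) (hw : w ∈ V) (huv : u ≠ v)
    (hut : u ≠ t) (hvt : v ≠ t) (huw : u ≠ w) {π τ : κ} (hπ : c u v = π)
    (hπu : IsExclusive c V {u} π) (hπv : IsExclusive c V {v} π)
    (hσ : IsExclusive c V {u} (c u t)) (hσ' : IsExclusive c V {v} (c v t)) (hσπ : c u t ≠ π)
    (hσ'π : c v t ≠ π) (hτ : IsExclusive c V {u, v} τ) (hτπ : τ ≠ π) (hτσ : τ ≠ c u t)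
    (hτσ' : τ ≠ c v t) (hwτ : c u w = τ) : IsExclusive c V {u} τ := by
  have hcommon : ∀ x ∈ V, u ≠ x → v ≠ x → c u x = τ → c v x = τ → False :=
    fun x hx hux hvx => false_of_common_witness hsym hPC hu hv ht hx huv hut hvt hux hvx hπ hσ
      hσ' hσπ hσ'π hτ hτπ hτσ hτσ'
  have hvw : v ≠ w := by rintro rfl; exact hτπ (hwτ.symm.trans hπ)
  have hvwτ : c v w ≠ τ := hcommon w hw huw hvw hwτ
  have hv_only : ∀ j ∈ V, v ≠ j → c v j = τ → False := by
    intro j hj hvj hjτ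
    have huj : u ≠ j := by rintro rfl; exact hτπ (hjτ.symm.trans ((hsym v u).trans hπ))
    by_cases hujτ : c u j = τ
    · exact hcommon j hj huj hvj hujτ hjτ
    · have hwj : w ≠ j := by rintro rfl; exact hvwτ hjτ
      exact hPC.false_of_crossing hu hv hw hj huv huw huj hvw hvj hwj hπ hπu hπv hτπ hwτ hjτ
        hujτ hvwτ
  intro i hi j hj hij hc
  rcases hτ i hi j hj hij hc with h | h <;> simp only [mem_insert, mem_singleton] at h ⊢
  · rcases h with h | h
    · exact Or.inl h
    · subst h
      exact (hv_only j hj hij hc).elim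
  · rcases h with h | h
    · exact Or.inr h
    · subst h
      exact (hv_only i hi (Ne.symm hij) ((hsym _ _).trans hc)).elim

theorem false_of_isExclusive_witness [DecidableEq α] (hsym : ∀ i j, c i j = c j i)
    (hPC : IsPCK4minusFreeOn c V) {u v t w : α} (hu : u ∈ V) (hv : v ∈ V) (ht : t ∈ V)
    (hw : w ∈ V) (huv : u ≠ v) (hut : u ≠ t) (hvt : v ≠ t) (huw : u ≠ w) {π τ : κ}
    (hπ : c u v = π) (hπu : IsExclusive c V {u} π) (hπv : IsExclusive c V {v} π)
    (hσ : IsExclusive c V {u} (c u t)) (hσ' : IsExclusive c V {v} (c v t)) (hσπ : c u t ≠ π)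
    (hσ'π : c v t ≠ π) (hτ : IsExclusive c V {u, v} τ) (hτπ : τ ≠ π) (hτσ : τ ≠ c u t)
    (hτσ' : τ ≠ c v t) (hwτ : c u w = τ) : False := by
  have hτu := isExclusive_of_witness hsym hPC hu hv ht hw huv hut hvt huw hπ hπu hπv hσ hσ'
    hσπ hσ'π hτ hτπ hτσ hτσ' hwτ
  have hvw : v ≠ w := by rintro rfl; exact hτπ (hwτ.symm.trans hπ)
  have htw : t ≠ w := by rintro rfl; exact hτσ hwτ.symm
  have hσσ' : c u t ≠ c v t := (hσ.apply_ne_of_ne hv ht hvt huv.symm hut.symm).symm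
  rcases hPC.eq_or_eq_of_common_base hsym hu hv ht hw huv hut huw hvt hvw htw hπ rfl hσ rfl hwτ
    hσπ hσ'π hσσ' hτπ hτσ with h | h
  · exact hσ'.apply_ne_of_ne ht hw htw hvt.symm hvw.symm h
  · exact hτu.apply_ne_of_ne ht hw htw hut.symm huw.symm h

end Configurations

section ExclusiveColors

variable {α κ : Type*} [DecidableEq κ] {c : α → α → κ} {V : Finset α}

def edgeColors (c : α → α → κ) (V : Finset α) : Finset κ :=
  V.offDiag.image fun p => c p.1 p.2

theorem mem_edgeColors {t : κ} : t ∈ edgeColors c V ↔ ∃ i ∈ V, ∃ j ∈ V, i ≠ j ∧ c i j = t := by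
  simp [edgeColors, and_assoc]

theorem edgeColors_comp_embedding {β : Type*} (c : α → α → κ) (f : β ↪ α) (s : Finset β) :
    edgeColors (fun i j => c (f i) (f j)) s = edgeColors c (s.map f) := by
  ext t
  simp [mem_edgeColors]

theorem card_edgeColors_le_choose_two [DecidableEq α] (hsym : ∀ i j, c i j = c j i) :
    #(edgeColors c V) ≤ (#V).choose 2 :=
  calc #(edgeColors c V) = #((V.offDiag.image Sym2.mk.uncurry).image (Sym2.lift ⟨c, hsym⟩)) := by
        rw [image_image]; rfl
    _ ≤ #(V.offDiag.image Sym2.mk.uncurry) := card_image_le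
    _ = (#V).choose 2 := Sym2.card_image_offDiag V

open scoped Classical in
noncomputable def exclusiveColors (c : α → α → κ) (V S : Finset α) : Finset κ :=
  {t ∈ edgeColors c V | IsExclusive c V S t}

theorem mem_exclusiveColors {S : Finset α} {t : κ} :
    t ∈ exclusiveColors c V S ↔ t ∈ edgeColors c V ∧ IsExclusive c V S t := by
  simp [exclusiveColors]

theorem card_edgeColors_le_add [DecidableEq α] (S : Finset α) :
    #(edgeColors c V) ≤ #(exclusiveColors c V S) + #(edgeColors c (V \ S)) := by
  refine (card_le_card fun t ht => ?_).trans (card_union_le _ _)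
  by_cases hex : IsExclusive c V S t
  · exact mem_union_left _ (mem_exclusiveColors.2 ⟨ht, hex⟩)
  · simp only [IsExclusive, not_forall, not_or] at hex
    obtain ⟨i, hi, j, hj, hij, hc, hiS, hjS⟩ := hex
    exact mem_union_right _
      (mem_edgeColors.2 ⟨i, mem_sdiff.2 ⟨hi, hiS⟩, j, mem_sdiff.2 ⟨hj, hjS⟩, hij, hc⟩)

theorem exists_apply_eq_of_mem_exclusiveColors (hsym : ∀ i j, c i j = c j i) {S : Finset α}
    {t : κ} (ht : t ∈ exclusiveColors c V S) : ∃ x ∈ S, ∃ a ∈ V, a ≠ x ∧ c x a = t := by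
  obtain ⟨hcol, hex⟩ := mem_exclusiveColors.1 ht
  obtain ⟨i, hi, j, hj, hij, rfl⟩ := mem_edgeColors.1 hcol
  rcases hex i hi j hj hij rfl with h | h
  · exact ⟨i, h, j, hj, hij.symm, rfl⟩
  · exact ⟨j, h, i, hi, hij, hsym j i⟩

theorem exists_apply_eq_of_mem_exclusiveColors_singleton (hsym : ∀ i j, c i j = c j i) {v : α}
    {t : κ} (ht : t ∈ exclusiveColors c V {v}) : ∃ a ∈ V, a ≠ v ∧ c v a = t := by
  obtain ⟨x, hx, h⟩ := exists_apply_eq_of_mem_exclusiveColors hsym ht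
  rwa [mem_singleton.1 hx] at h

def colorDegree [DecidableEq α] (c : α → α → κ) (V : Finset α) (v : α) (t : κ) : ℕ :=
  #{w ∈ V.erase v | c v w = t}

theorem IsExclusive.false_of_two_le_colorDegree [DecidableEq α] {a u : α} {δ : κ}
    (hδ : IsExclusive c V {a} δ) (hu : u ∈ V) (hua : u ≠ a) (h2 : 2 ≤ colorDegree c V u δ) :
    False := by
  obtain ⟨w₁, hw₁, w₂, hw₂, hne⟩ := one_lt_card.1 h2
  simp only [mem_filter, mem_erase] at hw₁ hw₂
  have h₁ := hδ u hu w₁ hw₁.1.2 (Ne.symm hw₁.1.1) hw₁.2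
  have h₂ := hδ u hu w₂ hw₂.1.2 (Ne.symm hw₂.1.1) hw₂.2
  simp only [mem_singleton, hua, false_or] at h₁ h₂
  exact hne (h₁.trans h₂.symm)

theorem IsExclusive.isExclusive_of_colorDegree_eq_one [DecidableEq α]
    (hsym : ∀ i j, c i j = c j i) {u a : α} (hα : IsExclusive c V {u} (c u a)) (ha : a ∈ V)
    (hau : a ≠ u) (h1 : colorDegree c V u (c u a) = 1) : IsExclusive c V {a} (c u a) := by
  have huniq : ∀ w ∈ V, w ≠ u → c u w = c u a → w = a := fun w hw hwu hc =>
    card_le_one.1 h1.le w (by simp [hw, hwu, hc]) a (by simp [ha, hau])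
  intro i hi j hj hij hc
  rcases hα i hi j hj hij hc with h | h <;> simp only [mem_singleton] at h ⊢ <;> subst h
  · exact Or.inr (huniq j hj (Ne.symm hij) hc)
  · exact Or.inl (huniq i hi hij ((hsym _ _).trans hc))

end ExclusiveColors

section Core

variable {α κ : Type*} [DecidableEq α] [DecidableEq κ] {c : α → α → κ} {V : Finset α}

theorem exists_colorDegree_lt (hsym : ∀ i j, c i j = c j i) (hPC : IsPCK4minusFreeOn c V)
    (hC1 : ∀ v ∈ V, 2 ≤ #(exclusiveColors c V {v})) {u : α} {γ : κ} (hu : u ∈ V)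
    (hγ : γ ∈ exclusiveColors c V {u}) (h2 : 2 ≤ colorDegree c V u γ) :
    ∃ a ∈ V, ∃ μ ∈ exclusiveColors c V {a}, colorDegree c V a μ < colorDegree c V u γ := by
  obtain ⟨a, ha, hau, rfl⟩ := exists_apply_eq_of_mem_exclusiveColors_singleton hsym hγ
  have hγex := (mem_exclusiveColors.1 hγ).2
  have hγa : ∀ δ, IsExclusive c V {a} δ → δ ≠ c u a := by
    rintro δ hδ rfl
    exact hδ.false_of_two_le_colorDegree hu (Ne.symm hau) h2
  obtain ⟨β, hβ, hβα⟩ := exists_mem_ne (hC1 u hu) (c u a)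
  obtain ⟨b, hb, hbu, rfl⟩ := exists_apply_eq_of_mem_exclusiveColors_singleton hsym hβ
  have hβex := (mem_exclusiveColors.1 hβ).2
  have hab : a ≠ b := by rintro rfl; exact hβα rfl
  obtain ⟨μ, hμ, hμb⟩ := exists_mem_ne (hC1 a ha) (c a b)
  -- The `μ`-edges at `a` go to `c u a`-neighbors of `u` other than `a`.
  refine ⟨a, ha, μ, hμ, lt_of_le_of_lt (card_le_card fun t ht => ?_)
    (card_erase_lt_of_mem (a := a) (by simp [ha, hau]))⟩
  simp only [mem_filter, mem_erase] at ht ⊢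
  obtain ⟨⟨hta, htV⟩, rfl⟩ := ht
  have hμex := (mem_exclusiveColors.1 hμ).2
  have htu : t ≠ u := by rintro rfl; exact hγa _ hμex (hsym a t)
  have htb : t ≠ b := by rintro rfl; exact hμb rfl
  rcases hPC.eq_or_eq_of_isExclusive hu ha hb htV (Ne.symm hau) (Ne.symm hbu) (Ne.symm htu) hab
    (Ne.symm hta) (Ne.symm htb) hγex hβex (Ne.symm hβα) hμex hμb with h | h
  · exact ⟨hta, ⟨htu, htV⟩, h⟩
  · obtain ⟨μ', hμ', hμ'μ⟩ := exists_mem_ne (hC1 a ha) (c a t)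
    obtain ⟨s, hs, hsa, rfl⟩ := exists_apply_eq_of_mem_exclusiveColors_singleton hsym hμ'
    have hμ'ex := (mem_exclusiveColors.1 hμ').2
    have hsu : s ≠ u := by rintro rfl; exact hγa _ hμ'ex (hsym a s)
    have hst : s ≠ t := by rintro rfl; exact hμ'μ rfl
    exact (hPC.false_of_isExclusive_cherries hsym hu ha htV hs (Ne.symm hau) (Ne.symm htu)
      (Ne.symm hsu) (Ne.symm hta) (Ne.symm hsa) (Ne.symm hst) hγex (h ▸ hβex)
      (h ▸ Ne.symm hβα) hμex hμ'ex (Ne.symm hμ'μ)).elim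

theorem exists_isExclusive_edge (hsym : ∀ i j, c i j = c j i) (hPC : IsPCK4minusFreeOn c V)
    (hC1 : ∀ v ∈ V, 2 ≤ #(exclusiveColors c V {v})) (hV : V.Nonempty) :
    ∃ u ∈ V, ∃ v ∈ V, u ≠ v ∧ IsExclusive c V {u} (c u v) ∧ IsExclusive c V {v} (c u v) := by
  let P := V.sigma fun v => exclusiveColors c V {v}
  obtain ⟨v, hv⟩ := hV
  have hP : P.Nonempty := by
    obtain ⟨t, ht⟩ := (card_pos (s := exclusiveColors c V {v})).1 (by have := hC1 v hv; omega)
    exact ⟨⟨v, t⟩, mem_sigma.2 ⟨hv, ht⟩⟩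
  obtain ⟨⟨u, γ⟩, huγ, hmin⟩ := P.exists_min_image (fun p => colorDegree c V p.1 p.2) hP
  obtain ⟨hu, hγ⟩ : u ∈ V ∧ γ ∈ exclusiveColors c V {u} := mem_sigma.1 huγ
  have h1 : colorDegree c V u γ = 1 := by
    obtain ⟨a, ha, hau, rfl⟩ := exists_apply_eq_of_mem_exclusiveColors_singleton hsym hγ
    have hpos : 0 < colorDegree c V u (c u a) := card_pos.2 ⟨a, by simp [ha, hau]⟩
    by_contra h
    obtain ⟨b, hb, μ, hμ, hlt⟩ := exists_colorDegree_lt hsym hPC hC1 hu hγ (by omega)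
    exact hlt.not_ge (hmin ⟨b, μ⟩ (mem_sigma.2 ⟨hb, hμ⟩))
  obtain ⟨a, ha, hau, rfl⟩ := exists_apply_eq_of_mem_exclusiveColors_singleton hsym hγ
  have hγex := (mem_exclusiveColors.1 hγ).2
  exact ⟨u, hu, a, ha, Ne.symm hau, hγex, hγex.isExclusive_of_colorDegree_eq_one hsym ha hau h1⟩

theorem exists_common_base (hsym : ∀ i j, c i j = c j i) (hPC : IsPCK4minusFreeOn c V)
    (hC1 : ∀ v ∈ V, 2 ≤ #(exclusiveColors c V {v})) {u v : α} (hu : u ∈ V) (hv : v ∈ V)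
    (huv : u ≠ v) (hπu : IsExclusive c V {u} (c u v)) (hπv : IsExclusive c V {v} (c u v)) :
    ∃ t ∈ V, t ≠ u ∧ t ≠ v ∧ IsExclusive c V {u} (c u t) ∧ IsExclusive c V {v} (c v t) ∧
      c u t ≠ c u v ∧ c v t ≠ c u v := by
  obtain ⟨σ, hσ, hσπ⟩ := exists_mem_ne (hC1 u hu) (c u v)
  obtain ⟨s, hs, hsu, rfl⟩ := exists_apply_eq_of_mem_exclusiveColors_singleton hsym hσ
  obtain ⟨σ', hσ', hσ'π⟩ := exists_mem_ne (hC1 v hv) (c u v)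
  obtain ⟨s', hs', hs'v, rfl⟩ := exists_apply_eq_of_mem_exclusiveColors_singleton hsym hσ'
  have hσex := (mem_exclusiveColors.1 hσ).2
  have hσ'ex := (mem_exclusiveColors.1 hσ').2
  have hsv : s ≠ v := by rintro rfl; exact hσπ rfl
  have hs'u : s' ≠ u := by rintro rfl; exact hσ'π (hsym v s')
  by_cases hss' : s = s'
  · subst hss'
    exact ⟨s, hs, hsu, hsv, hσex, hσ'ex, hσπ, hσ'π⟩
  · rcases hPC.eq_or_eq_of_isExclusive_edge hu hv hs hs' huv (Ne.symm hsu) (Ne.symm hs'u)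
      (Ne.symm hsv) (Ne.symm hs'v) hss' hπu hπv hσex hσπ hσ'ex hσ'π with h | h
    · exact ⟨s', hs', hs'u, hs'v, h ▸ hσex, hσ'ex, h ▸ hσπ, hσ'π⟩
    · exact ⟨s, hs, hsu, hsv, hσex, h ▸ hσ'ex, hσπ, h ▸ hσ'π⟩

theorem false_of_many_exclusiveColors (hsym : ∀ i j, c i j = c j i)
    (hPC : IsPCK4minusFreeOn c V) (hC1 : ∀ v ∈ V, 2 ≤ #(exclusiveColors c V {v}))
    (hC2 : ∀ u ∈ V, ∀ v ∈ V, u ≠ v → 4 ≤ #(exclusiveColors c V {u, v})) (hV : V.Nonempty) :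
    False := by
  obtain ⟨u, hu, v, hv, huv, hπu, hπv⟩ := exists_isExclusive_edge hsym hPC hC1 hV
  obtain ⟨t, ht, htu, htv, hσ, hσ', hσπ, hσ'π⟩ :=
    exists_common_base hsym hPC hC1 hu hv huv hπu hπv
  obtain ⟨τ, hτ, hτ'⟩ := exists_mem_notMem_of_card_lt_card
    ((card_le_three (a := c u v) (b := c u t) (c := c v t)).trans_lt (hC2 u hu v hv huv))
  simp only [mem_insert, mem_singleton, not_or] at hτ'
  obtain ⟨hτπ, hτσ, hτσ'⟩ := hτ'
  have hτex := (mem_exclusiveColors.1 hτ).2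
  obtain ⟨x, hx, w, hw, hwx, hwτ⟩ := exists_apply_eq_of_mem_exclusiveColors hsym hτ
  simp only [mem_insert, mem_singleton] at hx
  rcases hx with hx | hx <;> subst x
  · exact false_of_isExclusive_witness hsym hPC hu hv ht hw huv (Ne.symm htu) (Ne.symm htv)
      (Ne.symm hwx) rfl hπu hπv hσ hσ' hσπ hσ'π hτex hτπ hτσ hτσ' hwτ
  · exact false_of_isExclusive_witness hsym hPC hv hu ht hw (Ne.symm huv) (Ne.symm htv)
      (Ne.symm htu) (Ne.symm hwx) (hsym v u) hπv hπu hσ' hσ hσ'π hσπ (pair_comm u v ▸ hτex)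
      hτπ hτσ' hτσ hwτ

theorem card_edgeColors_le (hsym : ∀ i j, c i j = c j i) (hPC : IsPCK4minusFreeOn c V) :
    #(edgeColors c V) ≤ 3 * (#V - 1) / 2 := by
  induction V using Finset.strongInduction with
  | H V ih =>
  by_cases hV : #V ≤ 3
  · refine (card_edgeColors_le_choose_two hsym).trans ?_
    interval_cases #V <;> decide
  by_contra! hlt
  refine false_of_many_exclusiveColors hsym hPC (fun v hv => ?_) (fun u hu v hv huv => ?_)
    (card_pos.1 (by omega))
  · have hsub : {v} ⊆ V := singleton_subset_iff.2 hv
    have hIH := ih (V \ {v}) (sdiff_ssubset hsub (singleton_nonempty v)) (hPC.mono sdiff_subset)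
    have hadd := card_edgeColors_le_add (c := c) (V := V) {v}
    rw [card_sdiff_of_subset hsub, card_singleton] at hIH
    omega
  · have hsub : {u, v} ⊆ V := insert_subset hu (singleton_subset_iff.2 hv)
    have hIH := ih (V \ {u, v}) (sdiff_ssubset hsub (insert_nonempty u {v}))
      (hPC.mono sdiff_subset)
    have hadd := card_edgeColors_le_add (c := c) (V := V) {u, v}
    rw [card_sdiff_of_subset hsub, card_pair huv] at hIH
    omega

end Core

-- The vertices `2k+1, 2k+2` use the colors `3k` (down from `2k+1`), `3k+1` (down from `2k+2`)
-- and `3k+2` (the edge between them).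
def extremalColoring (i j : ℕ) : ℕ :=
  3 * ((max i j - 1) / 2) + if max i j % 2 = 1 then 0 else if min i j + 1 = max i j then 2 else 1

theorem extremalColoring_comm (i j : ℕ) : extremalColoring i j = extremalColoring j i := by
  rw [extremalColoring, extremalColoring, max_comm, min_comm]

theorem extremalColoring_of_lt {i j : ℕ} (h : i < j) :
    extremalColoring i j =
      3 * ((j - 1) / 2) + if j % 2 = 1 then 0 else if i + 1 = j then 2 else 1 := by
  rw [extremalColoring, max_eq_right h.le, min_eq_left h.le]

theorem extremalColoring_eq {i i' j : ℕ} (hi : i < j) (hi' : i' < j)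
    (h : j % 2 = 1 ∨ (i + 1 ≠ j ∧ i' + 1 ≠ j)) : extremalColoring i j = extremalColoring i' j := by
  rw [extremalColoring_of_lt hi, extremalColoring_of_lt hi']
  split_ifs <;> omega

theorem extremalColoring_pair_of_ne {i i' j : ℕ} (hi : i < j) (hi' : i' < j)
    (h : extremalColoring i j ≠ extremalColoring i' j) : j % 2 = 0 ∧ (i + 1 = j ∨ i' + 1 = j) := by
  by_contra h'
  exact h (extremalColoring_eq hi hi' (by omega))

theorem extremalColoring_eq_or_eq_or_eq {i i' i'' j : ℕ} (hi : i < j) (hi' : i' < j)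
    (hi'' : i'' < j) :
    extremalColoring i j = extremalColoring i' j ∨ extremalColoring i j = extremalColoring i'' j ∨
      extremalColoring i' j = extremalColoring i'' j := by
  rw [extremalColoring_of_lt hi, extremalColoring_of_lt hi', extremalColoring_of_lt hi'']
  split_ifs <;> omega

theorem not_isPCK4minus_extremalColoring (x y z w : ℕ) :
    ¬ IsPCK4minus extremalColoring x y z w := by
  rintro ⟨hxy, hxz, hxw, hyz, hyw, hzw, hc⟩
  obtain h | h | h | h : (y < x ∧ z < x ∧ w < x) ∨ (x < y ∧ z < y ∧ w < y) ∨
      (x < z ∧ y < z ∧ w < z) ∨ (x < w ∧ y < w ∧ z < w) := by clear hc; omega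
  · obtain ⟨e1, e2, e3, -⟩ := hc
    rw [extremalColoring_comm x y, extremalColoring_comm x z, extremalColoring_comm x w] at *
    rcases extremalColoring_eq_or_eq_or_eq h.1 h.2.1 h.2.2 with h' | h' | h'
    exacts [e1 h', e2 h', e3 h']
  · obtain ⟨-, -, -, e4, e5, e6, -⟩ := hc
    rw [extremalColoring_comm y z, extremalColoring_comm y w] at *
    rcases extremalColoring_eq_or_eq_or_eq h.1 h.2.1 h.2.2 with h' | h' | h'
    exacts [e4 h', e5 h', e6 h']
  · obtain ⟨-, e2, -, -, e5, -, e7, -⟩ := hc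
    obtain ⟨hz, hx | hy⟩ := extremalColoring_pair_of_ne h.1 h.2.1 e7
    · rw [extremalColoring_comm x y, extremalColoring_comm x w] at e2
      exact e2 (extremalColoring_eq (by omega) (by omega) (Or.inl (by omega)))
    · rw [extremalColoring_comm y w] at e5
      exact e5 (extremalColoring_eq (by omega) (by omega) (Or.inl (by omega)))
  · obtain ⟨e1, -, -, e4, -, -, -, e8⟩ := hc
    obtain ⟨hw, hx | hy⟩ := extremalColoring_pair_of_ne h.1 h.2.1 e8
    · rw [extremalColoring_comm x y, extremalColoring_comm x z] at e1
      exact e1 (extremalColoring_eq (by omega) (by omega) (Or.inl (by omega)))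
    · rw [extremalColoring_comm y z] at e4
      exact e4 (extremalColoring_eq (by omega) (by omega) (Or.inl (by omega)))

theorem edgeColors_extremalColoring (n : ℕ) :
    edgeColors extremalColoring (Iio n) = Iio (3 * (n - 1) / 2) := by
  ext t
  simp only [mem_edgeColors, mem_Iio]
  constructor
  · rintro ⟨i, hi, j, hj, hij, rfl⟩
    unfold extremalColoring
    split_ifs <;> omega
  · intro ht
    obtain ⟨k, r, hr, rfl⟩ : ∃ k r, r < 3 ∧ t = 3 * k + r := ⟨t / 3, t % 3, by omega, by omega⟩
    obtain ⟨i, j, hij, hj, hc⟩ : ∃ i j, i < j ∧ j < n ∧ extremalColoring i j = 3 * k + r := by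
      interval_cases r
      exacts [⟨0, 2 * k + 1, by omega, by omega, by simp [extremalColoring]⟩,
        ⟨0, 2 * k + 2, by omega, by omega, by simp [extremalColoring]; omega⟩,
        ⟨2 * k + 1, 2 * k + 2, by omega, by omega, by simp [extremalColoring]; omega⟩]
    exact ⟨i, by omega, j, hj, hij.ne, hc⟩

theorem colorsUsed_eq_card_edgeColors (n : ℕ) (c : Fin n → Fin n → ℕ) :
    colorsUsed n c = #(edgeColors c univ) := by
  rw [colorsUsed, edgeColors]
  congr 2
  ext p
  simp

theorem colorsUsed_extremalColoring (n : ℕ) :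
    colorsUsed n (fun i j => extremalColoring i j) = 3 * (n - 1) / 2 := by
  have h := edgeColors_comp_embedding extremalColoring (Fin.valEmbedding (n := n)) univ
  simp only [Fin.valEmbedding_apply, Fin.map_valEmbedding_univ, edgeColors_extremalColoring] at h
  rw [colorsUsed_eq_card_edgeColors, h, Nat.card_Iio]

theorem colorsUsed_le {n : ℕ} {c : Fin n → Fin n → ℕ} (hsym : ∀ i j, c i j = c j i)
    (hno : ¬ HasPCK4minus n c) : colorsUsed n c ≤ 3 * (n - 1) / 2 := by
  have := card_edgeColors_le (V := univ) hsym fun x _ y _ z _ w _ h => hno ⟨x, y, z, w, h⟩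
  rwa [card_univ, Fintype.card_fin, ← colorsUsed_eq_card_edgeColors] at this

theorem pr_K4minus_general (n : ℕ) :
    IsGreatest {m : ℕ | ∃ c : Fin n → Fin n → ℕ, (∀ i j, c i j = c j i) ∧
      ¬ HasPCK4minus n c ∧ colorsUsed n c = m} (3 * (n - 1) / 2) := by
  refine ⟨⟨fun i j => extremalColoring i j, fun i j => extremalColoring_comm i j,
    fun ⟨x, y, z, w, h⟩ => not_isPCK4minus_extremalColoring x y z w
      (IsPCK4minus.of_comp Fin.val_injective h), colorsUsed_extremalColoring n⟩, ?_⟩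
  rintro m ⟨c, hsym, hno, rfl⟩
  exact colorsUsed_le hsym hno

/-- For every `n ≥ 4`, the maximum number of colors in an edge-coloring of `K_n`
with no properly colored copy of `K_4` minus an edge equals `⌊3(n-1)/2⌋`. -/
theorem pr_K4minus (n : ℕ) (hn : 4 ≤ n) :
    IsGreatest {m : ℕ | ∃ c : Fin n → Fin n → ℕ, (∀ i j, c i j = c j i) ∧
      ¬ HasPCK4minus n c ∧ colorsUsed n c = m} (3 * (n - 1) / 2) :=
  pr_K4minus_general n
end

section
/- In any edge-coloring of K_n (n ≥ 4) containing a rainbow triangle with a pendant edge (a rainbow copy of K_3 with one extra edge of a fourth distinct color attached at a triangle vertex), if every vertex v has at least 2 colors that are starred at v, then K_n contains a properly colored 4-cycle. -/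
/-- The edge-colored `K_n` contains a properly colored cycle on `k` vertices. -/
def HasPCCycle (n k : ℕ) (c : Fin n → Fin n → ℕ) : Prop :=
  ∃ p : Fin k → Fin n, Function.Injective p ∧
    ∀ i : Fin k,
      c (p i) (p ⟨(i.1 + 1) % k, Nat.mod_lt _ (Nat.lt_of_le_of_lt (Nat.zero_le _) i.isLt)⟩) ≠
        c (p ⟨(i.1 + 1) % k, Nat.mod_lt _ (Nat.lt_of_le_of_lt (Nat.zero_le _) i.isLt)⟩)
          (p ⟨(i.1 + 2) % k, Nat.mod_lt _ (Nat.lt_of_le_of_lt (Nat.zero_le _) i.isLt)⟩)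

/-- In the edge-coloring `c` of `K_n`, the color `a` is starred at the vertex `x`:
`a` appears on some edge, and every edge of color `a` is incident with `x`
(so the edges of color `a` form a star centered at `x`). -/
def Starred (n : ℕ) (c : Fin n → Fin n → ℕ) (a : ℕ) (x : Fin n) : Prop :=
  (∃ i j : Fin n, i ≠ j ∧ c i j = a) ∧
    ∀ i j : Fin n, i ≠ j → c i j = a → i = x ∨ j = x


/-!
Write `A, B, C, D` for the colors of `xy, yz, xz, xu`, and `s, t` for those of `zu, yu`.
The cycles `xyzu`, `xzyu`, `xyuz` are properly colored unless `s = t ∈ {B, D}`. Then take a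
color `a ≠ D` starred at `u`, on an edge `up`. Being starred at `u`, `a` differs from the color
of every edge avoiding `u`, in particular from `B`; hence `p ∉ {x, y, z}`. If `s = t = B`,
one of the cycles `u p x y`, `u p x z` is proper because `A ≠ C`; if `s = t = D`, one of
`u p z x`, `u p z y` is proper because `B ≠ C`.
-/

section

variable {n : ℕ} {c : Fin n → Fin n → ℕ}

theorem Starred.apply_ne {a : ℕ} {v i j : Fin n} (ha : Starred n c a v) (hij : i ≠ j)
    (hi : i ≠ v) (hj : j ≠ v) : c i j ≠ a := fun h =>
  (ha.2 i j hij h).elim hi hj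

theorem Starred.exists_apply_eq (hsym : ∀ i j, c i j = c j i) {a : ℕ} {v : Fin n}
    (ha : Starred n c a v) : ∃ p, p ≠ v ∧ c v p = a := by
  obtain ⟨i, j, hij, hc⟩ := ha.1
  rcases ha.2 i j hij hc with rfl | rfl
  · exact ⟨j, hij.symm, hc⟩
  · exact ⟨i, hij, (hsym _ i).trans hc⟩

theorem exists_starred_ne {v : Fin n} (h : ∃ a b, a ≠ b ∧ Starred n c a v ∧ Starred n c b v)
    (d : ℕ) : ∃ a, Starred n c a v ∧ a ≠ d := by
  obtain ⟨a, b, hab, ha, hb⟩ := h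
  by_cases had : a = d
  · exact ⟨b, hb, fun hbd => hab (had.trans hbd.symm)⟩
  · exact ⟨a, ha, had⟩

theorem hasPCCycle_four {p q r s : Fin n}
    (hpq : p ≠ q) (hpr : p ≠ r) (hps : p ≠ s) (hqr : q ≠ r) (hqs : q ≠ s) (hrs : r ≠ s)
    (hpqr : c p q ≠ c q r) (hqrs : c q r ≠ c r s) (hrsp : c r s ≠ c s p)
    (hspq : c s p ≠ c p q) :
    HasPCCycle n 4 c := by
  refine ⟨![p, q, r, s], ?_, ?_⟩
  · intro i j hij
    fin_cases i <;> fin_cases j <;> simp_all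
  · intro i
    fin_cases i <;> simpa using ‹_›

variable (hsym : ∀ i j, c i j = c j i)
include hsym

theorem hasPCCycle_four_of_starred {a : ℕ} {u p v w : Fin n} (ha : Starred n c a u)
    (hp : c u p = a) (hup : u ≠ p) (huv : u ≠ v) (huw : u ≠ w) (hpv : p ≠ v) (hpw : p ≠ w)
    (hvw : v ≠ w) (hw : c u w ≠ a) (hwv : c u w ≠ c v w) (hvp : c v p ≠ c v w) :
    HasPCCycle n 4 c := by
  refine hasPCCycle_four hup huv huw hpv hpw hvw ?_ ?_ ?_ ?_
  · rw [hp]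
    exact (ha.apply_ne hpv hup.symm huv.symm).symm
  · rwa [hsym p v]
  · rw [hsym w u]
    exact hwv.symm
  · rw [hsym w u, hp]
    exact hw

theorem hasPCCycle_four_of_starred_of_ne {a : ℕ} {u v w₁ w₂ : Fin n} (ha : Starred n c a u)
    (huv : u ≠ v) (huw₁ : u ≠ w₁) (huw₂ : u ≠ w₂) (hvw₁ : v ≠ w₁) (hvw₂ : v ≠ w₂)
    (hv : c u v ≠ a) (hw₁ : c u w₁ ≠ a) (hw₂ : c u w₂ ≠ a)
    (h₁ : c u w₁ ≠ c v w₁) (h₂ : c u w₂ ≠ c v w₂) (hw : c v w₁ ≠ c v w₂) :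
    HasPCCycle n 4 c := by
  obtain ⟨p, hpu, hp⟩ := ha.exists_apply_eq hsym
  have hne : ∀ q, c u q ≠ a → p ≠ q := by
    rintro q hq rfl
    exact hq hp
  by_cases hvp : c v p = c v w₁
  · exact hasPCCycle_four_of_starred hsym ha hp hpu.symm huv huw₂ (hne v hv) (hne w₂ hw₂)
      hvw₂ hw₂ h₂ (hvp ▸ hw)
  · exact hasPCCycle_four_of_starred hsym ha hp hpu.symm huv huw₁ (hne v hv) (hne w₁ hw₁)
      hvw₁ hw₁ h₁ hvp

end

theorem pc_C4_of_rainbow_triangle_pendant_general (n : ℕ)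
    (c : Fin n → Fin n → ℕ) (hsym : ∀ i j, c i j = c j i)
    (x y z u : Fin n) (hxy : x ≠ y) (hxz : x ≠ z) (hxu : x ≠ u)
    (hyz : y ≠ z) (hyu : y ≠ u) (hzu : z ≠ u)
    (h1 : c x y ≠ c y z) (h2 : c x y ≠ c x z) (h3 : c x y ≠ c x u)
    (h4 : c y z ≠ c x z) (h5 : c y z ≠ c x u) (h6 : c x z ≠ c x u)
    (hstar : ∀ v : Fin n, ∃ a b : ℕ, a ≠ b ∧ Starred n c a v ∧ Starred n c b v) :
    HasPCCycle n 4 c := by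
  by_contra hno
  have hs : c z u = c y z ∨ c z u = c x u := by
    by_contra! hs
    refine hno (hasPCCycle_four hxy hxz hxu hyz hyu hzu h1 hs.1.symm ?_ ?_) <;> grind
  have ht : c y u = c y z ∨ c y u = c x u := by
    by_contra! ht
    refine hno (hasPCCycle_four hxz hxy hxu hyz.symm hzu hyu ?_ ?_ ?_ ?_) <;> grind
  have hst : c z u = c y u := by
    by_contra hst
    refine hno (hasPCCycle_four hxy hxu hxz hyu hyz hzu.symm ?_ ?_ ?_ ?_) <;> grind
  obtain ⟨a, ha, haD⟩ := exists_starred_ne (hstar u) (c x u)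
  have haB : c y z ≠ a := ha.apply_ne hyz hyu hzu
  rcases ht with hB | hD
  · refine hno (hasPCCycle_four_of_starred_of_ne hsym ha hxu.symm hyu.symm hzu.symm hxy hxz
      ?_ ?_ ?_ ?_ ?_ h2) <;> grind
  · refine hno (hasPCCycle_four_of_starred_of_ne hsym ha hzu.symm hxu.symm hyu.symm hxz.symm
      hyz.symm ?_ ?_ ?_ ?_ ?_ ?_) <;> grind

/-- If an edge-coloring of `K_n` (`n ≥ 4`) contains a rainbow triangle `xyz` with a
pendant edge `xu` (four edges with four pairwise distinct colors), and every vertex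
has at least two colors starred at it, then `K_n` contains a properly colored `C_4`. -/
theorem pc_C4_of_rainbow_triangle_pendant (n : ℕ) (hn : 4 ≤ n)
    (c : Fin n → Fin n → ℕ) (hsym : ∀ i j, c i j = c j i)
    (x y z u : Fin n) (hxy : x ≠ y) (hxz : x ≠ z) (hxu : x ≠ u)
    (hyz : y ≠ z) (hyu : y ≠ u) (hzu : z ≠ u)
    (h1 : c x y ≠ c y z) (h2 : c x y ≠ c x z) (h3 : c x y ≠ c x u)
    (h4 : c y z ≠ c x z) (h5 : c y z ≠ c x u) (h6 : c x z ≠ c x u)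
    (hstar : ∀ v : Fin n, ∃ a b : ℕ, a ≠ b ∧ Starred n c a v ∧ Starred n c b v) :
    HasPCCycle n 4 c :=
  pc_C4_of_rainbow_triangle_pendant_general n c hsym x y z u hxy hxz hxu hyz hyu hzu h1 h2 h3 h4 h5
    h6 hstar
end

section
/- Let c be an edge-coloring of K_n with no properly colored path on l vertices, and let P = v_1…v_s be a properly colored path of maximum order s ≤ l - 1. Let G be a spanning subgraph of K_n obtained by selecting, for each color not appearing on P, exactly one edge of that color. Then for any vertex u outside P with no edge of G joining u to another vertex outside P, and any three consecutive vertices v_i, v_{i+1}, v_{i+2} of P, at most one of the edges u v_i, u v_{i+1}, u v_{i+2} belongs to G. -/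
/-- `G` is a representing subgraph of the colors of `c` not appearing on the properly
colored path `p` on `s` vertices: every edge of `G` has a color not on `p`, `G` has
exactly one edge of each of its colors, and every color not on `p` appears on an
edge of `G`. -/
def RepresentingSubgraph (n s : ℕ) (c : Fin n → Fin n → ℕ) (p : Fin s → Fin n)
    (G : SimpleGraph (Fin n)) : Prop :=
  (∀ i j : Fin n, G.Adj i j → ∀ k : ℕ, (h : k + 1 < s) →
      c (p ⟨k, by omega⟩) (p ⟨k + 1, h⟩) ≠ c i j) ∧
  (∀ i j k l : Fin n, G.Adj i j → G.Adj k l → c i j = c k l →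
      s(i, j) = s(k, l)) ∧
  (∀ i j : Fin n, i ≠ j →
      (∀ k : ℕ, (h : k + 1 < s) → c (p ⟨k, by omega⟩) (p ⟨k + 1, h⟩) ≠ c i j) →
      ∃ a b : Fin n, G.Adj a b ∧ c a b = c i j)

/-!
If `u` had `G`-neighbours at two of `v_i, v_{i+1}, v_{i+2}`, then `u` could be inserted into
`P`, giving a longer properly colored path. The two facts that make this work are that a
`G`-edge has a color absent from `P` and that two `G`-edges at `u` have distinct colors.
For the pair `v_i, v_{i+2}`, the color of `u v_{i+1}` decides whether `u` goes right before or
right after `v_{i+1}`.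
-/

def IsProperlyColored {n s : ℕ} (c : Fin n → Fin n → ℕ) (p : Fin s → Fin n) : Prop :=
  ∀ i : ℕ, (h : i + 2 < s) →
    c (p ⟨i, by omega⟩) (p ⟨i + 1, by omega⟩) ≠ c (p ⟨i + 1, by omega⟩) (p ⟨i + 2, h⟩)

def OffPath {n s : ℕ} (c : Fin n → Fin n → ℕ) (p : Fin s → Fin n) (x : ℕ) : Prop :=
  ∀ k : ℕ, (h : k + 1 < s) → c (p ⟨k, by omega⟩) (p ⟨k + 1, h⟩) ≠ x

section Insertion

variable {n s : ℕ} {c : Fin n → Fin n → ℕ} {p : Fin s → Fin n}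

theorem hasPCPath_succ_of_insert (hinj : Function.Injective p) (hpc : IsProperlyColored c p)
    {u : Fin n} (hu : u ∉ Set.range p) (k : ℕ) (hk : k + 1 < s)
    (hleft : ∀ j : ℕ, (h : j + 1 = k) →
      c (p ⟨j, by omega⟩) (p ⟨k, by omega⟩) ≠ c (p ⟨k, by omega⟩) u)
    (hmid : c (p ⟨k, by omega⟩) u ≠ c u (p ⟨k + 1, hk⟩))
    (hright : ∀ h : k + 2 < s, c u (p ⟨k + 1, hk⟩) ≠ c (p ⟨k + 1, hk⟩) (p ⟨k + 2, h⟩)) :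
    HasPCPath n (s + 1) c := by
  refine ⟨fun j => if h : (j : ℕ) ≤ k then p ⟨j, by omega⟩ else
      if (j : ℕ) = k + 1 then u else p ⟨(j : ℕ) - 1, by omega⟩, ?_, ?_⟩
  · intro a b hab
    apply Fin.ext
    dsimp only at hab
    split_ifs at hab <;>
      first
        | omega
        | (have := hinj hab; rw [Fin.mk.injEq] at this; omega)
        | exact absurd (Set.mem_range.mpr ⟨_, hab.symm⟩) hu
        | exact absurd (Set.mem_range.mpr ⟨_, hab⟩) hu
  · intro j hj
    dsimp only
    split_ifs <;> try omega
    · exact hpc j (by omega)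
    · obtain rfl : k = j + 1 := by omega
      exact hleft j rfl
    · obtain rfl : k = j := by omega
      simpa using hmid
    · obtain rfl : k + 1 = j := by omega
      simpa using hright (by omega)
    · obtain ⟨m, rfl⟩ : ∃ m, j = m + 1 := ⟨j - 1, by omega⟩
      simpa using hpc m (by omega)

theorem hasPCPath_succ_of_insert_of_offPath (hinj : Function.Injective p)
    (hpc : IsProperlyColored c p) {u : Fin n} (hu : u ∉ Set.range p) (k : ℕ) (hk : k + 1 < s)
    (hleft : OffPath c p (c (p ⟨k, by omega⟩) u)) (hright : OffPath c p (c u (p ⟨k + 1, hk⟩)))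
    (hmid : c (p ⟨k, by omega⟩) u ≠ c u (p ⟨k + 1, hk⟩)) :
    HasPCPath n (s + 1) c :=
  hasPCPath_succ_of_insert hinj hpc hu k hk (fun j hj => by subst hj; exact hleft j (by omega))
    hmid fun h => (hright (k + 1) h).symm

end Insertion

namespace RepresentingSubgraph

variable {n s : ℕ} {c : Fin n → Fin n → ℕ} {p : Fin s → Fin n} {G : SimpleGraph (Fin n)}

theorem offPath (hG : RepresentingSubgraph n s c p G) {a b : Fin n} (h : G.Adj a b) :
    OffPath c p (c a b) :=
  hG.1 a b h

theorem color_ne_of_adj_of_adj (hG : RepresentingSubgraph n s c p G) {a b d : Fin n}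
    (hab : G.Adj a b) (hbd : G.Adj b d) (had : a ≠ d) : c a b ≠ c b d := fun hc =>
  match Sym2.eq_iff.mp (hG.2.1 a b b d hab hbd hc) with
  | .inl h => hab.ne h.1
  | .inr h => had h.1

theorem not_adj_and_adj_succ (hG : RepresentingSubgraph n s c p G)
    (hinj : Function.Injective p) (hpc : IsProperlyColored c p)
    (hlong : ¬ HasPCPath n (s + 1) c) {u : Fin n} (hu : u ∉ Set.range p)
    (k : ℕ) (hk : k + 1 < s) :
    ¬ (G.Adj u (p ⟨k, by omega⟩) ∧ G.Adj u (p ⟨k + 1, hk⟩)) := by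
  rintro ⟨hx, hy⟩
  refine hlong (hasPCPath_succ_of_insert_of_offPath hinj hpc hu k hk
    (hG.offPath hx.symm) (hG.offPath hy) (hG.color_ne_of_adj_of_adj hx.symm hy ?_))
  exact hinj.ne (by rw [Ne, Fin.mk.injEq]; omega)

theorem not_adj_and_adj_add_two (hG : RepresentingSubgraph n s c p G)
    (hsym : ∀ i j, c i j = c j i) (hinj : Function.Injective p) (hpc : IsProperlyColored c p)
    (hlong : ¬ HasPCPath n (s + 1) c) {u : Fin n} (hu : u ∉ Set.range p)
    (i : ℕ) (h2 : i + 2 < s) :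
    ¬ (G.Adj u (p ⟨i, by omega⟩) ∧ G.Adj u (p ⟨i + 2, h2⟩)) := by
  rintro ⟨hx, hy⟩
  set v₀ := p ⟨i, by omega⟩
  set v₁ := p ⟨i + 1, by omega⟩
  set v₂ := p ⟨i + 2, h2⟩
  by_cases h₀ : c v₁ u = c v₀ u
  · refine hlong (hasPCPath_succ_of_insert_of_offPath hinj hpc hu (i + 1) h2
      (h₀ ▸ hG.offPath hx.symm) (hG.offPath hy) ?_)
    rw [h₀]
    exact hG.color_ne_of_adj_of_adj hx.symm hy (hinj.ne (by rw [Ne, Fin.mk.injEq]; omega))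
  by_cases h₂ : c v₁ u = c v₁ v₂
  · refine hlong (hasPCPath_succ_of_insert hinj hpc hu (i + 1) h2 ?_ ?_ ?_)
    · intro j hj
      obtain rfl : i = j := by omega
      exact h₂ ▸ hpc i h2
    · exact h₂ ▸ hG.offPath hy (i + 1) h2
    · exact fun h => (hG.offPath hy (i + 2) h).symm
  · refine hlong (hasPCPath_succ_of_insert hinj hpc hu i (by omega) ?_ ?_ ?_)
    · intro j hj
      subst hj
      exact hG.offPath hx.symm j (by omega)
    · exact hsym v₁ u ▸ Ne.symm h₀
    · exact fun _ => hsym v₁ u ▸ h₂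

end RepresentingSubgraph

theorem at_most_one_of_three_consecutive (n s : ℕ)
    (c : Fin n → Fin n → ℕ) (hsym : ∀ i j, c i j = c j i)
    (p : Fin s → Fin n) (hinj : Function.Injective p)
    (hpc : ∀ i : ℕ, (h : i + 2 < s) →
      c (p ⟨i, by omega⟩) (p ⟨i + 1, by omega⟩) ≠
        c (p ⟨i + 1, by omega⟩) (p ⟨i + 2, h⟩))
    (hmax : ∀ t : ℕ, s < t → ¬ HasPCPath n t c)
    (G : SimpleGraph (Fin n)) (hG : RepresentingSubgraph n s c p G)
    (u : Fin n) (hu : u ∉ Set.range p)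
    (i : ℕ) (h2 : i + 2 < s) :
    ¬ (G.Adj u (p ⟨i, by omega⟩) ∧ G.Adj u (p ⟨i + 1, by omega⟩)) ∧
    ¬ (G.Adj u (p ⟨i, by omega⟩) ∧ G.Adj u (p ⟨i + 2, h2⟩)) ∧
    ¬ (G.Adj u (p ⟨i + 1, by omega⟩) ∧ G.Adj u (p ⟨i + 2, h2⟩)) := by
  have hlong : ¬ HasPCPath n (s + 1) c := hmax (s + 1) s.lt_succ_self
  exact ⟨hG.not_adj_and_adj_succ hinj hpc hlong hu i (by omega),
    hG.not_adj_and_adj_add_two hsym hinj hpc hlong hu i h2,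
    hG.not_adj_and_adj_succ hinj hpc hlong hu (i + 1) h2⟩
end

section
/- Let c be an edge-coloring of K_n with no properly colored path on l vertices, let P = v_1…v_s be a properly colored path of maximum order, and let G be a representing subgraph of the colors not on P chosen to maximize the number of edges joining V(P) to V(K_n)\V(P). Then no vertex u outside P with an edge of G to some other vertex outside P is joined in G to any of v_1, v_2, v_{s-1}, v_s. -/
/-- The number of edges of `G` joining the path `p` to the vertices outside `p`. -/
noncomputable def crossingEdges (n s : ℕ) (p : Fin s → Fin n)
    (G : SimpleGraph (Fin n)) : ℕ :=
  Set.ncard {e : Sym2 (Fin n) | e ∈ G.edgeSet ∧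
    ∃ i j : Fin n, e = s(i, j) ∧ i ∈ Set.range p ∧ j ∉ Set.range p}

section

variable {n s m : ℕ} {c : Fin n → Fin n → ℕ}

-- `HasPCPath n l c` unfolds to `∃ q : Fin l → Fin n, q.Injective ∧ ProperlyColored c q`.
variable (c) in
def ProperlyColored (q : Fin s → Fin n) : Prop :=
  ∀ i : ℕ, (h : i + 2 < s) →
    c (q ⟨i, by omega⟩) (q ⟨i + 1, by omega⟩) ≠ c (q ⟨i + 1, by omega⟩) (q ⟨i + 2, h⟩)

variable (c) in
def pathColors (q : Fin s → Fin n) : Set ℕ :=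
  {x | ∃ k : ℕ, ∃ h : k + 1 < s, c (q ⟨k, by omega⟩) (q ⟨k + 1, h⟩) = x}

theorem ProperlyColored.cons {q : Fin (m + 1) → Fin n} (hq : ProperlyColored c q) (u : Fin n)
    (hu : ∀ h : 1 < m + 1, c u (q 0) ≠ c (q 0) (q ⟨1, h⟩)) :
    ProperlyColored c (Fin.cons u q : Fin (m + 2) → Fin n) := by
  rintro (_ | i) h
  · exact hu (by omega)
  · exact hq i (by omega)

theorem ProperlyColored.tail {q : Fin (m + 1) → Fin n} (hq : ProperlyColored c q) :
    ProperlyColored c (Fin.tail q) :=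
  fun i _ => hq (i + 1) (by omega)

theorem ProperlyColored.comp_rev (hsym : ∀ x y, c x y = c y x) {q : Fin s → Fin n}
    (hq : ProperlyColored c q) : ProperlyColored c (q ∘ Fin.rev) := by
  intro i h
  have h0 : Fin.rev ⟨i, by omega⟩ = (⟨s - 3 - i + 2, by omega⟩ : Fin s) := by ext; simp only [Fin.val_rev]; omega
  have h1 : Fin.rev ⟨i + 1, by omega⟩ = (⟨s - 3 - i + 1, by omega⟩ : Fin s) := by ext; simp only [Fin.val_rev]; omega
  have h2 : Fin.rev ⟨i + 2, h⟩ = (⟨s - 3 - i, by omega⟩ : Fin s) := by ext; simp only [Fin.val_rev]; omega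
  simp only [Function.comp_apply, h0, h1, h2]
  rw [hsym (q ⟨s - 3 - i + 2, _⟩), hsym (q ⟨s - 3 - i + 1, _⟩) (q ⟨s - 3 - i, _⟩)]
  exact (hq (s - 3 - i) (by omega)).symm

theorem pathColors_comp_rev (hsym : ∀ x y, c x y = c y x) (q : Fin s → Fin n) :
    pathColors c (q ∘ Fin.rev) = pathColors c q := by
  have key : ∀ q : Fin s → Fin n, pathColors c (q ∘ Fin.rev) ⊆ pathColors c q := by
    rintro q x ⟨k, hk, rfl⟩
    refine ⟨s - 2 - k, by omega, ?_⟩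
    have h0 : Fin.rev ⟨k, by omega⟩ = (⟨s - 2 - k + 1, by omega⟩ : Fin s) := by ext; simp only [Fin.val_rev]; omega
    have h1 : Fin.rev ⟨k + 1, hk⟩ = (⟨s - 2 - k, by omega⟩ : Fin s) := by ext; simp only [Fin.val_rev]; omega
    simp only [Function.comp_apply, h0, h1]
    exact hsym _ _
  refine (key q).antisymm ?_
  have := key (q ∘ Fin.rev)
  rwa [Function.comp_assoc, Fin.rev_involutive.comp_self, Function.comp_id] at this

theorem hasPCPath_cons {q : Fin (m + 2) → Fin n} (hq : Function.Injective q)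
    (hpc : ProperlyColored c q) {u : Fin n} (hu : u ∉ Set.range q)
    (hc : c u (q 0) ≠ c (q 0) (q 1)) : HasPCPath n (m + 3) c :=
  ⟨Fin.cons u q, Fin.cons_injective_iff.mpr ⟨hu, hq⟩, hpc.cons u fun _ => hc⟩

theorem hasPCPath_cons_cons_tail {q : Fin (m + 2) → Fin n} (hq : Function.Injective q)
    (hpc : ProperlyColored c q) {u w : Fin n} (hu : u ∉ Set.range q) (hw : w ∉ Set.range q)
    (hwu : w ≠ u) (hc₀ : c w u ≠ c u (q 1))
    (hc₁ : ∀ h : 2 < m + 2, c u (q 1) ≠ c (q 1) (q ⟨2, h⟩)) : HasPCPath n (m + 3) c := by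
  have hrange : Set.range (Fin.tail q) ⊆ Set.range q := Set.range_comp_subset_range _ _
  refine ⟨Fin.cons w (Fin.cons u (Fin.tail q)), ?_,
    (hpc.tail.cons u fun _ => hc₁ (by omega)).cons w fun _ => hc₀⟩
  refine Fin.cons_injective_iff.mpr ⟨?_, Fin.cons_injective_iff.mpr ⟨?_, ?_⟩⟩
  · rw [Fin.range_cons]
    exact fun h => h.elim hwu fun h => hw (hrange h)
  · exact fun h => hu (hrange h)
  · exact hq.comp (Fin.succ_injective _)

theorem not_adj_zero_one_of_maximal {q : Fin (m + 2) → Fin n} (hq : Function.Injective q)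
    (hpc : ProperlyColored c q) (hmax : ¬ HasPCPath n (m + 3) c) {G : SimpleGraph (Fin n)}
    (hcol : ∀ x y, G.Adj x y → c x y ∉ pathColors c q)
    (hrep : ∀ a b x y, G.Adj a b → G.Adj x y → c a b = c x y → s(a, b) = s(x, y))
    {u w : Fin n} (hu : u ∉ Set.range q) (hw : w ∉ Set.range q) (huw : G.Adj u w) :
    ¬ G.Adj u (q 0) ∧ ¬ G.Adj u (q 1) := by
  constructor <;> intro hadj <;> apply hmax
  · exact hasPCPath_cons hq hpc hu fun h => hcol _ _ hadj ⟨0, by omega, h.symm⟩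
  · refine hasPCPath_cons_cons_tail hq hpc hu hw huw.ne.symm (fun h => ?_)
      fun _ h => hcol _ _ hadj ⟨1, by omega, h.symm⟩
    rcases Sym2.eq_iff.mp (hrep w u u (q 1) huw.symm hadj h) with ⟨rfl, -⟩ | ⟨rfl, -⟩
    · exact huw.ne rfl
    · exact hw ⟨1, rfl⟩

end

/-- Let `c` be an edge-coloring of `K_n` with no properly colored `P_l`, let
`p = v_1 … v_s` be a properly colored path of maximum order, and let `G` be a
representing subgraph of the colors not on `p` chosen with the number of edges
joining `p` to the remaining vertices as large as possible. Then no vertex `u`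
outside `p` having a `G`-edge to another vertex outside `p` is joined in `G` to
any of `v_1, v_2, v_{s-1}, v_s`. -/
theorem not_adj_path_ends (n s : ℕ) (hs : 2 ≤ s)
    (c : Fin n → Fin n → ℕ) (hsym : ∀ i j, c i j = c j i)
    (p : Fin s → Fin n) (hinj : Function.Injective p)
    (hpc : ∀ i : ℕ, (h : i + 2 < s) →
      c (p ⟨i, by omega⟩) (p ⟨i + 1, by omega⟩) ≠
        c (p ⟨i + 1, by omega⟩) (p ⟨i + 2, h⟩))
    (hmax : ∀ t : ℕ, s < t → ¬ HasPCPath n t c)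
    (G : SimpleGraph (Fin n)) (hG : RepresentingSubgraph n s c p G)
    (u : Fin n) (hu : u ∉ Set.range p)
    (hw : ∃ w : Fin n, w ∉ Set.range p ∧ G.Adj u w) :
    ¬ G.Adj u (p ⟨0, by omega⟩) ∧ ¬ G.Adj u (p ⟨1, by omega⟩) ∧
    ¬ G.Adj u (p ⟨s - 2, by omega⟩) ∧ ¬ G.Adj u (p ⟨s - 1, by omega⟩) := by
  obtain ⟨m, rfl⟩ : ∃ m, s = m + 2 := ⟨s - 2, by omega⟩
  obtain ⟨w, hw, huw⟩ := hw
  have hcol : ∀ x y, G.Adj x y → c x y ∉ pathColors c p :=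
    fun x y hxy ⟨k, hk, h⟩ => hG.1 x y hxy k hk h
  have hrange : Set.range (p ∘ Fin.rev) = Set.range p := Fin.rev_surjective.range_comp p
  obtain ⟨h₀, h₁⟩ := not_adj_zero_one_of_maximal hinj hpc (hmax _ (by omega)) hcol hG.2.1 hu hw huw
  obtain ⟨h₀', h₁'⟩ := not_adj_zero_one_of_maximal (hinj.comp Fin.rev_injective)
    (ProperlyColored.comp_rev hsym hpc) (hmax _ (by omega))
    (by rwa [pathColors_comp_rev hsym]) hG.2.1 (hrange ▸ hu) (hrange ▸ hw) huw
  exact ⟨h₀, h₁, h₁', h₀'⟩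
end
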